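/- arXiv:2211.14852 — 10 statements merged into one kernel-verified Lean document; each statement's English description precedes it below -/
import Mathlib

section
/- The point (1,1,0) is a local minimum of f, with f(1,1,0) = 1; that is, there exists ε > 0 such that f(x) ≥ 1 = f(1,1,0) for all x ∈ ℝ³ with ‖x − (1,1,0)‖ ≤ ε. -/
/-- The ReLU neural network objective `f(x₁,x₂,x₃) = |x₃·max(x₂,0) − 1| + |x₃·max(x₁+x₂,0)|`,
viewed as a function on `ℝ³` (with coordinates `x 0, x 1, x 2`). -/
noncomputable def f (x : EuclideanSpace ℝ (Fin 3)) : ℝ :=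
  |x 2 * max (x 1) 0 - 1| + |x 2 * max (x 0 + x 1) 0|

/-- The point `(1,1,0)` in `ℝ³`. -/
noncomputable def p : EuclideanSpace ℝ (Fin 3) :=
  (WithLp.equiv 2 (Fin 3 → ℝ)).symm ![1, 1, 0]

lemma coord_le (x : EuclideanSpace ℝ (Fin 3)) (i : Fin 3) : |x i - p i| ≤ ‖x - p‖ := by
  have h : ‖x - p‖ = Real.sqrt (∑ j, ‖(x - p) j‖ ^ 2) := EuclideanSpace.norm_eq _
  rw [h]
  have h1 : |x i - p i| = Real.sqrt (‖(x - p) i‖ ^ 2) := by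
    rw [Real.sqrt_sq_eq_abs]
    simp
  rw [h1]
  apply Real.sqrt_le_sqrt
  exact Finset.single_le_sum (f := fun j => ‖(x - p) j‖ ^ 2)
    (fun j _ => by positivity) (Finset.mem_univ i)

/-- The point `(1,1,0)` is a local minimum of `f`, with `f(1,1,0) = 1`: there exists `ε > 0`
such that `f x ≥ 1 = f(1,1,0)` for all `x ∈ ℝ³` with `‖x − (1,1,0)‖ ≤ ε`. -/
theorem stmt1 :
    f p = 1 ∧
    ∃ ε > 0, ∀ x : EuclideanSpace ℝ (Fin 3), ‖x - p‖ ≤ ε → 1 ≤ f x := by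
  constructor
  · simp [f, p]
  · refine ⟨1/2, by norm_num, fun x hx => ?_⟩
    have h0 := (coord_le x 0).trans hx
    have h1 := (coord_le x 1).trans hx
    have h2 := (coord_le x 2).trans hx
    have hp0 : p 0 = 1 := by simp [p]
    have hp1 : p 1 = 1 := by simp [p]
    have hp2 : p 2 = 0 := by simp [p]
    rw [hp0] at h0; rw [hp1] at h1; rw [hp2] at h2
    rw [abs_le] at h0 h1 h2
    have hx1 : max (x 1) 0 = x 1 := max_eq_left (by linarith [h1.1])
    have hx01 : max (x 0 + x 1) 0 = x 0 + x 1 := max_eq_left (by linarith [h0.1, h1.1])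
    have hlt : x 2 * x 1 ≤ 3/4 := by nlinarith [h1.1, h1.2, h2.1, h2.2]
    have habs : |x 2 * x 1 - 1| = 1 - x 2 * x 1 := by
      rw [abs_of_nonpos (by linarith)]; ring
    rw [f, hx1, hx01, habs]
    have h2' : -|x 2| * x 1 ≤ -x 2 * x 1 := by
      have := mul_le_mul_of_nonneg_right (neg_le_neg (le_abs_self (x 2)))
        (show (0:ℝ) ≤ x 1 by linarith [h1.1])
      linarith
    have h3 : |x 2 * (x 0 + x 1)| = |x 2| * (x 0 + x 1) := by
      rw [abs_mul, abs_of_nonneg (show (0:ℝ) ≤ x 0 + x 1 by linarith [h0.1, h1.1])]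
    rw [h3]
    nlinarith [abs_nonneg (x 2), h0.1, h1.1]
end

section
/- The point (1,1,0) is a spurious local minimum of f: it is a local minimum of f, yet f(−1,1,1) = 0 < 1 = f(1,1,0); moreover f(x) ≥ 0 for all x ∈ ℝ³, so the infimum of f over ℝ³ equals 0, which is strictly smaller than f(1,1,0). -/
/-- The point `(−1,1,1)` in `ℝ³`. -/
noncomputable def q : EuclideanSpace ℝ (Fin 3) :=
  (WithLp.equiv 2 (Fin 3 → ℝ)).symm ![-1, 1, 1]

lemma coord_le_norm (y : EuclideanSpace ℝ (Fin 3)) (i : Fin 3) : |y i| ≤ ‖y‖ := by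
  rw [EuclideanSpace.norm_eq]
  have h1 : |y i| = Real.sqrt (‖y i‖ ^ 2) := by
    rw [Real.sqrt_sq_eq_abs]; simp
  rw [h1]
  apply Real.sqrt_le_sqrt
  exact Finset.single_le_sum (f := fun j => ‖y j‖ ^ 2)
    (fun j _ => by positivity) (Finset.mem_univ i)

lemma fp_eq : f p = 1 := by
  simp [f, p]

/-- The point `(1,1,0)` is a spurious local minimum of `f`: it is a local minimum of `f`, yet
`f(−1,1,1) = 0 < 1 = f(1,1,0)`; moreover `f(x) ≥ 0` for all `x ∈ ℝ³`, so the infimum of `f`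
over `ℝ³` equals `0`, which is strictly smaller than `f(1,1,0)`. -/
theorem stmt3 :
    (∃ ε > 0, ∀ x : EuclideanSpace ℝ (Fin 3), ‖x - p‖ ≤ ε → f p ≤ f x) ∧
    f q = 0 ∧ f p = 1 ∧
    (∀ x : EuclideanSpace ℝ (Fin 3), 0 ≤ f x) ∧
    (⨅ x : EuclideanSpace ℝ (Fin 3), f x) = 0 ∧
    (⨅ x : EuclideanSpace ℝ (Fin 3), f x) < f p := by
  have hq : f q = 0 := by norm_num [f, q, Matrix.cons_val_two]
  have hnn : ∀ x : EuclideanSpace ℝ (Fin 3), 0 ≤ f x := fun x => by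
    unfold f; positivity
  have hinf : (⨅ x : EuclideanSpace ℝ (Fin 3), f x) = 0 := by
    apply le_antisymm
    · calc (⨅ x, f x) ≤ f q := ciInf_le ⟨0, fun y ⟨x, hx⟩ => hx ▸ hnn x⟩ q
      _ = 0 := hq
    · exact le_ciInf hnn
  refine ⟨⟨1/2, by norm_num, fun x hx => ?_⟩, hq, fp_eq, hnn, hinf, by rw [hinf, fp_eq]; norm_num⟩
  -- local minimum
  have h0 : |x 0 - 1| ≤ 1/2 := by
    have := coord_le_norm (x - p) 0
    simpa [p] using this.trans hx
  have h1 : |x 1 - 1| ≤ 1/2 := by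
    have := coord_le_norm (x - p) 1
    simpa [p] using this.trans hx
  have h2 : |x 2| ≤ 1/2 := by
    have := coord_le_norm (x - p) 2
    simpa [p] using this.trans hx
  rw [abs_le] at h0 h1 h2
  have hx1 : max (x 1) 0 = x 1 := max_eq_left (by linarith [h1.1])
  have hx01 : max (x 0 + x 1) 0 = x 0 + x 1 := max_eq_left (by linarith [h0.1, h1.1])
  rw [fp_eq, f, hx1, hx01]
  have hb : x 2 * x 1 ≤ 3/4 := by nlinarith [h1.2, h2.1, h2.2]
  have habs1 : |x 2 * x 1 - 1| = 1 - x 2 * x 1 := by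
    rw [abs_of_nonpos (by linarith)]; ring
  rw [habs1, abs_mul,
    abs_of_nonneg (show (0:ℝ) ≤ x 0 + x 1 by linarith [h0.1, h1.1])]
  have k1 : x 2 * x 1 ≤ |x 2| * x 1 :=
    mul_le_mul_of_nonneg_right (le_abs_self (x 2)) (by linarith [h1.1])
  have k2 : 0 ≤ |x 2| * x 0 := mul_nonneg (abs_nonneg _) (by linarith [h0.1])
  nlinarith [k1, k2]
end

section
/- There is a constant c₃ = √5 witnessing the Verdier condition for f at (1,1,0) along the plane S = {x ∈ ℝ³ : x₃ = 0}: for every x = (x₁,x₂,x₃) with x₁ ≥ 1/2, x₂ ≥ 1/2, x₂x₃ < 1 and x₃ ≠ 0, f is differentiable at x and its gradient v = (v₁,v₂,v₃) = ∇f(x) satisfies v₁² + v₂² ≤ 5x₃², and hence v₁² + v₂² ≤ 5‖x − y‖² for every y = (y₁,y₂,0) ∈ S. -/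
open EuclideanSpace

theorem key (x : EuclideanSpace ℝ (Fin 3)) (c : ℝ)
    (hx : f =ᶠ[nhds x] fun y => 1 - proj (2:Fin 3) y * proj (1:Fin 3) y
      + c * (proj (2:Fin 3) y * (proj (0:Fin 3) y + proj (1:Fin 3) y))) :
    HasGradientAt f ((WithLp.equiv 2 (Fin 3 → ℝ)).symm
      ![c * x 2, (c - 1) * x 2, c * (x 0 + x 1) - x 1]) x := by
  have h0 := (proj (0:Fin 3) (𝕜 := ℝ)).hasFDerivAt (x := x)
  have h1 := (proj (1:Fin 3) (𝕜 := ℝ)).hasFDerivAt (x := x)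
  have h2 := (proj (2:Fin 3) (𝕜 := ℝ)).hasFDerivAt (x := x)
  have hg : HasFDerivAt (fun y : EuclideanSpace ℝ (Fin 3) =>
      1 - proj (2:Fin 3) y * proj (1:Fin 3) y
        + c * (proj (2:Fin 3) y * (proj (0:Fin 3) y + proj (1:Fin 3) y)))
      (((0 : EuclideanSpace ℝ (Fin 3) →L[ℝ] ℝ)
        - (proj (2:Fin 3) x • proj (1:Fin 3) + proj (1:Fin 3) x • proj (2:Fin 3)))
        + c • (proj (2:Fin 3) x • (proj (0:Fin 3) + proj (1:Fin 3))
          + (proj (0:Fin 3) x + proj (1:Fin 3) x) • proj (2:Fin 3))) x := by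
    exact ((hasFDerivAt_const (1:ℝ) x).sub (h2.mul h1)).add
      ((h2.mul (h0.add h1)).const_mul c)
  rw [hasGradientAt_iff_hasFDerivAt]
  refine (hg.congr_of_eventuallyEq hx).congr_fderiv ?_
  ext h
  simp [InnerProductSpace.toDual_apply_apply, PiLp.inner_apply, Fin.sum_univ_three,
    PiLp.toLp_apply, PiLp.proj_apply]
  ring

/-- Verdier condition with constant `c₃ = √5` for `f` at `(1,1,0)` along the plane
`S = {x : x₃ = 0}`: for every `x = (x₁,x₂,x₃)` with `x₁ ≥ 1/2`, `x₂ ≥ 1/2`, `x₂x₃ < 1` and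
`x₃ ≠ 0`, `f` is differentiable at `x` and its gradient `v = (v₁,v₂,v₃)` satisfies
`v₁² + v₂² ≤ 5x₃²`, hence `v₁² + v₂² ≤ 5‖x − y‖²` for every `y = (y₁,y₂,0) ∈ S`.
(Note `(v₁, v₂, 0)` is the projection of `v` onto the tangent space of `S`.) -/
theorem stmt6 (x : EuclideanSpace ℝ (Fin 3))
    (h1 : 1 / 2 ≤ x 0) (h2 : 1 / 2 ≤ x 1) (h3 : x 1 * x 2 < 1) (h4 : x 2 ≠ 0) :
    ∃ v : EuclideanSpace ℝ (Fin 3), HasGradientAt f v x ∧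
      v 0 ^ 2 + v 1 ^ 2 ≤ 5 * x 2 ^ 2 ∧
      ∀ y : EuclideanSpace ℝ (Fin 3), y 2 = 0 →
        v 0 ^ 2 + v 1 ^ 2 ≤ 5 * ‖x - y‖ ^ 2 := by
  set c : ℝ := if 0 < x 2 then 1 else -1 with hc
  -- continuity facts
  have cont1 : Continuous fun y : EuclideanSpace ℝ (Fin 3) => y 1 := (proj (1:Fin 3)).continuous
  have cont01 : Continuous fun y : EuclideanSpace ℝ (Fin 3) => y 0 + y 1 :=
    ((proj (0:Fin 3)).continuous.add (proj (1:Fin 3)).continuous)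
  have cont2 : Continuous fun y : EuclideanSpace ℝ (Fin 3) => y 2 := (proj (2:Fin 3)).continuous
  have cont21 : Continuous fun y : EuclideanSpace ℝ (Fin 3) => y 2 * y 1 := cont2.mul cont1
  have e1 : ∀ᶠ y in nhds x, 0 < y 1 :=
    cont1.continuousAt.eventually (eventually_gt_nhds (show (0:ℝ) < x 1 by linarith))
  have e01 : ∀ᶠ y in nhds x, 0 < y 0 + y 1 :=
    cont01.continuousAt.eventually (eventually_gt_nhds (show (0:ℝ) < x 0 + x 1 by linarith))
  have e21 : ∀ᶠ y in nhds x, y 2 * y 1 < 1 :=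
    cont21.continuousAt.eventually (eventually_lt_nhds (show x 2 * x 1 < 1 from mul_comm (x 1) (x 2) ▸ h3))
  have esign : ∀ᶠ y in nhds x, |y 2 * (y 0 + y 1)| = c * (y 2 * (y 0 + y 1)) := by
    rcases lt_or_gt_of_ne h4 with hneg | hpos
    · have := cont2.continuousAt.eventually (eventually_lt_nhds hneg)
      filter_upwards [this, e01] with y hy hy01
      rw [abs_of_nonpos (mul_nonpos_of_nonpos_of_nonneg hy.le hy01.le)]
      simp [hc, not_lt.mpr hneg.le]
    · have := cont2.continuousAt.eventually (eventually_gt_nhds hpos)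
      filter_upwards [this, e01] with y hy hy01
      rw [abs_of_nonneg (mul_nonneg hy.le hy01.le)]
      simp [hc, hpos]
  have hfe : f =ᶠ[nhds x] fun y => 1 - proj (2:Fin 3) y * proj (1:Fin 3) y
      + c * (proj (2:Fin 3) y * (proj (0:Fin 3) y + proj (1:Fin 3) y)) := by
    filter_upwards [e1, e01, e21, esign] with y hy1 hy01 hy21 hys
    simp only [f, PiLp.proj_apply, max_eq_left hy1.le, max_eq_left hy01.le,
      abs_of_nonpos (by linarith : y 2 * y 1 - 1 ≤ 0), hys]
    ring
  refine ⟨_, key x c hfe, ?_, ?_⟩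
  · show (c * x 2) ^ 2 + ((c - 1) * x 2) ^ 2 ≤ 5 * x 2 ^ 2
    by_cases hp : 0 < x 2 <;> simp [hc, hp] <;> nlinarith [sq_nonneg (x 2)]
  · intro y hy
    have hle : (c * x 2) ^ 2 + ((c - 1) * x 2) ^ 2 ≤ 5 * x 2 ^ 2 := by
      by_cases hp : 0 < x 2 <;> simp [hc, hp] <;> nlinarith [sq_nonneg (x 2)]
    have hnorm : x 2 ^ 2 ≤ ‖x - y‖ ^ 2 := by
      rw [EuclideanSpace.norm_eq, Real.sq_sqrt (by positivity), Fin.sum_univ_three]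
      simp only [PiLp.sub_apply, hy, sub_zero, Real.norm_eq_abs, sq_abs]
      nlinarith [sq_nonneg (x 0 - y 0), sq_nonneg (x 1 - y 1)]
    show (c * x 2) ^ 2 + ((c - 1) * x 2) ^ 2 ≤ 5 * ‖x - y‖ ^ 2
    nlinarith
end

section
/- The gradient of f is metrically subregular with exponent 1 and constant 1 near (1,1,0): for every x = (x₁,x₂,x₃) with x₁ ≥ 1/2, x₂ ≥ 1/2, x₂x₃ < 1 and x₃ ≠ 0, f is differentiable at x and dist(x, S) = |x₃| ≤ ‖∇f(x)‖, where S = {z ∈ ℝ³ : z₃ = 0}. -/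
/-- The plane `S = {z ∈ ℝ³ : z₃ = 0}` of critical points of `f` near `(1,1,0)`. -/
def S : Set (EuclideanSpace ℝ (Fin 3)) := {z | z 2 = 0}

set_option maxHeartbeats 1600000 in
open RealInnerProductSpace in
/-- Metric subregularity of the gradient of `f` with exponent `1` and constant `1` near
`(1,1,0)`: for every `x = (x₁,x₂,x₃)` with `x₁ ≥ 1/2`, `x₂ ≥ 1/2`, `x₂x₃ < 1` and `x₃ ≠ 0`,
`f` is differentiable at `x` and `dist(x, S) = |x₃| ≤ ‖∇f(x)‖`. -/
theorem stmt7 (x : EuclideanSpace ℝ (Fin 3))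
    (h1 : 1 / 2 ≤ x 0) (h2 : 1 / 2 ≤ x 1) (h3 : x 1 * x 2 < 1) (h4 : x 2 ≠ 0) :
    DifferentiableAt ℝ f x ∧
    Metric.infDist x S = |x 2| ∧
    |x 2| ≤ ‖gradient f x‖ := by
  obtain ⟨s, hs, hsx⟩ : ∃ s : ℝ, (s = 1 ∨ s = -1) ∧ 0 < s * x 2 := by
    rcases lt_or_gt_of_ne h4 with h | h
    · exact ⟨-1, Or.inr rfl, by nlinarith⟩
    · exact ⟨1, Or.inl rfl, by nlinarith⟩
  set g : EuclideanSpace ℝ (Fin 3) → ℝ :=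
    fun y => 1 - y 2 * y 1 + s * (y 2 * (y 0 + y 1)) with hg
  have hproj : ∀ i, Continuous fun y : EuclideanSpace ℝ (Fin 3) => y i :=
    fun i => (EuclideanSpace.proj i).continuous
  have hUopen : IsOpen {y : EuclideanSpace ℝ (Fin 3) |
      0 < y 1 ∧ 0 < y 0 + y 1 ∧ y 1 * y 2 < 1 ∧ 0 < s * y 2} := by
    apply IsOpen.inter (isOpen_lt continuous_const (hproj 1))
    apply IsOpen.inter (isOpen_lt continuous_const ((hproj 0).add (hproj 1)))
    exact IsOpen.inter (isOpen_lt ((hproj 1).mul (hproj 2)) continuous_const)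
      (isOpen_lt continuous_const (continuous_const.mul (hproj 2)))
  have hxU : x ∈ {y : EuclideanSpace ℝ (Fin 3) |
      0 < y 1 ∧ 0 < y 0 + y 1 ∧ y 1 * y 2 < 1 ∧ 0 < s * y 2} :=
    ⟨by linarith, by linarith, h3, hsx⟩
  have hfg : f =ᶠ[nhds x] g := by
    filter_upwards [hUopen.mem_nhds hxU] with y hy
    obtain ⟨hy1, hy01, hy2, hys⟩ := hy
    have habs : |y 2 * (y 0 + y 1)| = s * (y 2 * (y 0 + y 1)) := by
      rcases hs with rfl | rfl
      · rw [one_mul] at hys ⊢; exact abs_of_pos (by positivity)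
      · have : y 2 < 0 := by linarith
        rw [abs_of_nonpos (by nlinarith)]; ring
    simp only [f, hg, max_eq_left hy1.le, max_eq_left hy01.le,
      abs_of_neg (by nlinarith : y 2 * y 1 - 1 < 0), habs]
    ring
  have hp : ∀ i : Fin 3, HasFDerivAt (fun y : EuclideanSpace ℝ (Fin 3) => y i)
      (EuclideanSpace.proj (𝕜 := ℝ) i) x := fun i => by
    have h := (EuclideanSpace.proj (𝕜 := ℝ) (ι := Fin 3) i).hasFDerivAt (x := x)
    convert h using 1
    exact funext fun y => rfl
  have hgd : HasFDerivAt g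
      ((0 : EuclideanSpace ℝ (Fin 3) →L[ℝ] ℝ)
        - ((x 2) • EuclideanSpace.proj 1 + (x 1) • EuclideanSpace.proj 2)
        + s • ((x 2) • (EuclideanSpace.proj 0 + EuclideanSpace.proj 1)
          + (x 0 + x 1) • EuclideanSpace.proj 2)) x := by
    exact ((hasFDerivAt_const (1:ℝ) x).sub ((hp 2).mul (hp 1))).add
      (((hp 2).mul ((hp 0).add (hp 1))).const_mul s)
  have hdiff : DifferentiableAt ℝ f x :=
    hfg.differentiableAt_iff.mpr hgd.differentiableAt
  refine ⟨hdiff, ?_, ?_⟩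
  · -- infDist
    apply le_antisymm
    · have hz : (x - (x 2) • EuclideanSpace.single 2 (1:ℝ)) ∈ S := by
        simp [S, EuclideanSpace.single_apply]
      calc Metric.infDist x S ≤ dist x (x - (x 2) • EuclideanSpace.single 2 (1:ℝ)) :=
            Metric.infDist_le_dist_of_mem hz
        _ = |x 2| := by
            rw [dist_eq_norm, sub_sub_cancel, norm_smul, EuclideanSpace.norm_single]
            simp [Real.norm_eq_abs]
    · refine le_of_not_gt fun hlt => ?_
      obtain ⟨y, hyS, hxy⟩ := (Metric.infDist_lt_iff ⟨0, show (0:EuclideanSpace ℝ (Fin 3)) ∈ S by simp [S]⟩).mp hlt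
      have h2 : |x 2 - y 2| ≤ dist x y := by
        have := abs_real_inner_le_norm (x - y) (EuclideanSpace.single 2 (1:ℝ))
        rw [EuclideanSpace.inner_single_right, EuclideanSpace.norm_single] at this
        simpa [dist_eq_norm] using this
      rw [hyS] at h2
      simp only [sub_zero] at h2
      linarith
  · have key : fderiv ℝ f x (EuclideanSpace.single 0 (1:ℝ)) = s * x 2 := by
      rw [hfg.fderiv_eq, hgd.fderiv]
      simp [PiLp.proj_apply, EuclideanSpace.single_apply]
    have hinner : ⟪gradient f x, EuclideanSpace.single 0 (1:ℝ)⟫ = s * x 2 := by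
      rw [gradient, InnerProductSpace.toDual_symm_apply, key]
    have hcs := abs_real_inner_le_norm (gradient f x) (EuclideanSpace.single 0 (1:ℝ))
    rw [hinner, EuclideanSpace.norm_single, norm_one, mul_one] at hcs
    have habs : |s * x 2| = |x 2| := by
      rcases hs with rfl | rfl <;> simp [abs_mul]
    linarith [hcs, habs.symm.le]
end

section
/- The function C(x₁,x₂,x₃) = 1 − x₁ increases along gradient steps of f near (1,1,0) proportionally to the distance to the critical set: if x = (x₁,x₂,x₃) satisfies x₁ ≥ 1/2, x₂ ≥ 1/2, x₂x₃ < 1 and x₃ ≠ 0, and x' = x − α∇f(x) for some α > 0 (f being differentiable at x), then C(x') − C(x) = α|x₃| = α·dist(x, S), where S = {z ∈ ℝ³ : z₃ = 0}. -/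
/-- The Chetaev function `C(x₁,x₂,x₃) = 1 − x₁`. -/
noncomputable def C (x : EuclideanSpace ℝ (Fin 3)) : ℝ := 1 - x 0

open InnerProductSpace

/-- The Chetaev function `C` increases along gradient steps of `f` near `(1,1,0)`
proportionally to the distance to the critical set: if `x = (x₁,x₂,x₃)` satisfies `x₁ ≥ 1/2`,
`x₂ ≥ 1/2`, `x₂x₃ < 1` and `x₃ ≠ 0`, and `x' = x − α∇f(x)` with `α > 0` (`f` being
differentiable at `x`), then `C(x') − C(x) = α|x₃| = α·dist(x, S)`. -/
theorem stmt8 (x : EuclideanSpace ℝ (Fin 3))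
    (h1 : 1 / 2 ≤ x 0) (h2 : 1 / 2 ≤ x 1) (h3 : x 1 * x 2 < 1) (h4 : x 2 ≠ 0)
    (α : ℝ) (hα : 0 < α) :
    DifferentiableAt ℝ f x ∧
    C (x - α • gradient f x) - C x = α * |x 2| ∧
    α * |x 2| = α * Metric.infDist x S := by
  let E := EuclideanSpace ℝ (Fin 3)
  set s : ℝ := if 0 < x 2 then 1 else -1 with hs
  -- coordinate projections
  have hc : ∀ i : Fin 3, ContinuousAt (fun y : E => y i) x := fun i =>
    (EuclideanSpace.proj i : E →L[ℝ] ℝ).continuous.continuousAt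
  have hd : ∀ i : Fin 3, HasFDerivAt (fun y : E => y i)
      (EuclideanSpace.proj i : E →L[ℝ] ℝ) x :=
    fun i => (EuclideanSpace.proj i : E →L[ℝ] ℝ).hasFDerivAt
  set g : E → ℝ := fun y => (1 - y 2 * y 1) + s * (y 2 * (y 0 + y 1)) with hg
  -- f = g near x
  have hsx : s * x 2 = |x 2| := by
    rcases lt_or_gt_of_ne h4 with h | h
    · simp [hs, not_lt.2 h.le, abs_of_neg h]
    · simp [hs, h, abs_of_pos h]
  have hev : f =ᶠ[nhds x] g := by
    have e1 : ∀ᶠ y : E in nhds x, 0 < y 1 :=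
      (continuousAt_const.eventually_lt (hc 1) (by linarith))
    have e2 : ∀ᶠ y : E in nhds x, 0 < y 0 + y 1 :=
      (continuousAt_const.eventually_lt ((hc 0).add (hc 1)) (by linarith))
    have e3 : ∀ᶠ y : E in nhds x, y 1 * y 2 < 1 :=
      (((hc 1).mul (hc 2)).eventually_lt continuousAt_const h3)
    have e4 : ∀ᶠ y : E in nhds x, s * y 2 = |y 2| := by
      rcases lt_or_gt_of_ne h4 with h | h
      · filter_upwards [(hc 2).eventually_lt continuousAt_const h] with y hy
        simp [hs, not_lt.2 h.le, abs_of_neg hy]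
      · filter_upwards [continuousAt_const.eventually_lt (hc 2) h] with y hy
        simp [hs, h, abs_of_pos hy]
    filter_upwards [e1, e2, e3, e4] with y hy1 hy2 hy3 hy4
    change 0 < y 1 at hy1; change 0 < y 0 + y 1 at hy2; change y 1 * y 2 < 1 at hy3; change s * y 2 = |y 2| at hy4
    have : |y 2 * y 1 - 1| = 1 - y 2 * y 1 := by
      rw [abs_of_nonpos] <;> nlinarith
    simp only [f, hg, max_eq_left hy1.le, max_eq_left hy2.le, this,
      abs_mul, ← hy4, abs_of_pos hy2]
    ring
  -- derivative of g
  set L : E →L[ℝ] ℝ :=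
    (0 : E →L[ℝ] ℝ) - (x 2 • (EuclideanSpace.proj 1 : E →L[ℝ] ℝ) +
        x 1 • (EuclideanSpace.proj 2 : E →L[ℝ] ℝ)) +
      s • (x 2 • ((EuclideanSpace.proj 0 : E →L[ℝ] ℝ) + (EuclideanSpace.proj 1 : E →L[ℝ] ℝ)) +
        (x 0 + x 1) • (EuclideanSpace.proj 2 : E →L[ℝ] ℝ)) with hL
  have hgd : HasFDerivAt g L x := by
    have h1' := hd 0; have h2' := hd 1; have h3' := hd 2
    exact ((hasFDerivAt_const (1:ℝ) x).sub (h3'.mul h2')).add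
      ((h3'.mul (h1'.add h2')).const_mul s)
  have hdf : DifferentiableAt ℝ f x :=
    (hgd.differentiableAt.congr_of_eventuallyEq hev)
  have hfderiv : fderiv ℝ f x = L := by
    rw [hev.fderiv_eq, hgd.fderiv]
  have hL0 : L (EuclideanSpace.single 0 (1:ℝ)) = s * x 2 := by
    have hp : ∀ i j : Fin 3, (EuclideanSpace.proj i : E →L[ℝ] ℝ) (EuclideanSpace.single j (1:ℝ)) = if j = i then 1 else 0 := by
      intro i j; simp [PiLp.proj_apply, EuclideanSpace.single_apply, eq_comm]
    simp [hL, hp]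
  have hgrad : gradient f x = (InnerProductSpace.toDual ℝ E).symm L := by
    rw [gradient, hfderiv]
  have hgrad0 : (gradient f x) 0 = |x 2| := by
    have key : ⟪gradient f x, EuclideanSpace.single 0 (1:ℝ)⟫_ℝ = (gradient f x) 0 := by
      rw [EuclideanSpace.inner_single_right]; simp
    rw [← key, hgrad, InnerProductSpace.toDual_symm_apply, hL0, hsx]
  refine ⟨hdf, ?_, ?_⟩
  · have : (x - α • gradient f x) 0 = x 0 - α * (gradient f x) 0 := rfl
    simp only [C, this, hgrad0]; ring
  · have hinf : Metric.infDist x S = |x 2| := by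
      apply le_antisymm
      · have hz : (x - EuclideanSpace.single 2 (x 2) : E) ∈ S := by
          show x 2 - (EuclideanSpace.single 2 (x 2) : E) 2 = 0
          simp [EuclideanSpace.single_apply]
        calc Metric.infDist x S ≤ dist x (x - EuclideanSpace.single 2 (x 2)) :=
              Metric.infDist_le_dist_of_mem hz
          _ = |x 2| := by
              rw [dist_eq_norm]
              simp [EuclideanSpace.norm_single]
      · rw [Metric.infDist_eq_iInf]
        haveI : Nonempty S := ⟨⟨0, by simp [S]⟩⟩
        apply le_ciInf
        rintro ⟨z, hz⟩
        have : |x 2 - z 2| ≤ dist x z := by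
          have h := abs_real_inner_le_norm (x - z : E) (EuclideanSpace.single 2 (1:ℝ))
          rw [EuclideanSpace.inner_single_right] at h
          simpa [dist_eq_norm, EuclideanSpace.norm_single, PiLp.sub_apply] using h
        simpa [Set.mem_setOf_eq.mp hz] using this
    rw [hinf]
end

section
/- The pair (X*, Y*) with Y* = 0 is a local minimum of the function f(X,Y) = ‖XYᵀ − M‖₁ on ℝ^{m×r} × ℝ^{n×r}, with f(X*, Y*) = ‖M‖₁: there exists δ > 0 such that f(X,Y) ≥ ‖M‖₁ whenever every entry of X − X* and of Y has absolute value at most δ. -/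
open scoped Matrix
open Finset

/-- The entrywise `ℓ¹` norm of a real matrix: `‖A‖₁ = Σ_{i,j} |A_{ij}|`. -/
noncomputable def l1norm {m n : ℕ} (A : Matrix (Fin m) (Fin n) ℝ) : ℝ :=
  ∑ i, ∑ j, |A i j|

/-- Vector ℓ¹ norm. -/
noncomputable def v1 {r : ℕ} (y : Fin r → ℝ) : ℝ := ∑ k, |y k|

lemma v1_nonneg {r : ℕ} (y : Fin r → ℝ) : 0 ≤ v1 y :=
  Finset.sum_nonneg fun _ _ => abs_nonneg _

lemma abs_le_v1 {r : ℕ} (y : Fin r → ℝ) (k : Fin r) : |y k| ≤ v1 y := by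
  rw [v1]
  exact Finset.single_le_sum (f := fun k => |y k|) (fun _ _ => abs_nonneg _) (Finset.mem_univ k)

lemma v1_add_le {r : ℕ} (f g : Fin r → ℝ) : v1 (f + g) ≤ v1 f + v1 g := by
  rw [v1, v1, v1, ← Finset.sum_add_distrib]
  exact Finset.sum_le_sum fun k _ => abs_add_le _ _

lemma aux_sum {ι : Type*} {r : ℕ} (s : Finset ι) (C : ι → Fin r → ℝ) (y : Fin r → ℝ)
    (δ : ℝ) (h : ∀ i ∈ s, ∀ k, |C i k| ≤ δ) :
    ∑ i ∈ s, |∑ k, C i k * y k| ≤ s.card * δ * v1 y := by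
  calc ∑ i ∈ s, |∑ k, C i k * y k|
      ≤ ∑ _i ∈ s, (δ * v1 y) := by
        refine Finset.sum_le_sum fun i hi => ?_
        calc |∑ k, C i k * y k| ≤ ∑ k, |C i k * y k| := Finset.abs_sum_le_sum_abs _ _
          _ = ∑ k, |C i k| * |y k| := by simp [abs_mul]
          _ ≤ ∑ k, δ * |y k| := Finset.sum_le_sum fun k _ =>
              mul_le_mul_of_nonneg_right (h i hi k) (abs_nonneg _)
          _ = δ * v1 y := by rw [v1, Finset.mul_sum]
    _ = s.card * (δ * v1 y) := by rw [Finset.sum_const, nsmul_eq_mul]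
    _ = s.card * δ * v1 y := by ring

lemma v1_le_of_leftInv {r : ℕ} (A B : Matrix (Fin r) (Fin r) ℝ) (hBA : B * A = 1)
    (y : Fin r → ℝ) : v1 y ≤ (∑ i, ∑ k, |B i k|) * v1 (A.mulVec y) := by
  have hy : y = B.mulVec (A.mulVec y) := by
    rw [Matrix.mulVec_mulVec, hBA, Matrix.one_mulVec]
  calc v1 y = ∑ i, |∑ k, B i k * (A.mulVec y) k| := by
        conv_lhs => rw [hy]
        simp [v1, Matrix.mulVec, dotProduct]
    _ ≤ ∑ i, ∑ k, |B i k * (A.mulVec y) k| :=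
        Finset.sum_le_sum fun i _ => Finset.abs_sum_le_sum_abs _ _
    _ = ∑ i, ∑ k, |B i k| * |(A.mulVec y) k| := by simp [abs_mul]
    _ ≤ ∑ i, ∑ k, |B i k| * v1 (A.mulVec y) :=
        Finset.sum_le_sum fun i _ => Finset.sum_le_sum fun k _ =>
          mul_le_mul_of_nonneg_left (abs_le_v1 _ k) (abs_nonneg _)
    _ = (∑ i, ∑ k, |B i k|) * v1 (A.mulVec y) := by
        rw [Finset.sum_mul]; exact Finset.sum_congr rfl fun i _ => (Finset.sum_mul _ _ _).symm

/-- Let `M ∈ ℝ^{m×n}` have its first `r` rows zero, and let `X* ∈ ℝ^{m×r}` have its first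
`r` rows forming an invertible matrix `X̂*` and its remaining rows zero. Then `(X*, Y*)`
with `Y* = 0` is a local minimum of `f(X,Y) = ‖XYᵀ − M‖₁`, with `f(X*,Y*) = ‖M‖₁`:
there exists `δ > 0` such that `f(X,Y) ≥ ‖M‖₁` whenever every entry of `X − X*` and of `Y`
has absolute value at most `δ`. -/
theorem stmt12 (m n r : ℕ) (hm : 0 < m) (hn : 0 < n) (hr : 0 < r) (hrm : r ≤ m)
    (M : Matrix (Fin m) (Fin n) ℝ)
    (hM : ∀ i : Fin m, (i : ℕ) < r → ∀ j, M i j = 0)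
    (Xs : Matrix (Fin m) (Fin r) ℝ)
    (hXsInv : IsUnit (Xs.submatrix (Fin.castLE hrm) id))
    (hXs0 : ∀ i : Fin m, r ≤ (i : ℕ) → ∀ j, Xs i j = 0) :
    l1norm (Xs * (0 : Matrix (Fin n) (Fin r) ℝ)ᵀ - M) = l1norm M ∧
    ∃ δ > 0, ∀ (X : Matrix (Fin m) (Fin r) ℝ) (Y : Matrix (Fin n) (Fin r) ℝ),
      (∀ i j, |(X - Xs) i j| ≤ δ) → (∀ i j, |Y i j| ≤ δ) →
      l1norm M ≤ l1norm (X * Yᵀ - M) := by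
  constructor
  · simp [l1norm, Matrix.transpose_zero, Matrix.mul_zero, zero_sub,
      Matrix.neg_apply, abs_neg]
  · obtain ⟨u, hu⟩ := hXsInv
    set A : Matrix (Fin r) (Fin r) ℝ := Xs.submatrix (Fin.castLE hrm) id with hAdef
    set B : Matrix (Fin r) (Fin r) ℝ := ↑u⁻¹ with hBdef
    have hBA : B * A = 1 := by rw [hBdef, ← hu]; exact u.inv_mul
    set K : ℝ := (∑ i, ∑ k, |B i k|) + 1 with hKdef
    have hK0 : (0:ℝ) ≤ ∑ i, ∑ k, |B i k| :=
      Finset.sum_nonneg fun _ _ => Finset.sum_nonneg fun _ _ => abs_nonneg _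
    have hK : 0 < K := by rw [hKdef]; linarith
    set δ : ℝ := 1 / (K * (m + r + 1)) with hδdef
    have hδ : 0 < δ := by
      apply div_pos one_pos
      apply mul_pos hK
      positivity
    refine ⟨δ, hδ, ?_⟩
    intro X Y hX hY
    set Xh : Matrix (Fin r) (Fin r) ℝ := X.submatrix (Fin.castLE hrm) id with hXhdef
    have hcol : ∀ j, ∑ i, |M i j| ≤ ∑ i, |(X * Yᵀ) i j - M i j| := by
      intro j
      set y : Fin r → ℝ := fun k => Y j k with hydef
      have hvy : 0 ≤ v1 y := v1_nonneg y
      have hentry : ∀ i, (X * Yᵀ) i j = ∑ k, X i k * y k := by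
        intro i; simp [Matrix.mul_apply, Matrix.transpose_apply, hydef]
      -- split the sum by rows
      have hsplit : ∀ (f : Fin m → ℝ), ∑ i, f i =
          (∑ i ∈ univ.filter (fun i : Fin m => (i : ℕ) < r), f i) +
          ∑ i ∈ univ.filter (fun i : Fin m => ¬ (i : ℕ) < r), f i :=
        fun f => (Finset.sum_filter_add_sum_filter_not univ _ f).symm
      -- the M side: only rows ≥ r contribute
      have hMside : ∑ i, |M i j| =
          ∑ i ∈ univ.filter (fun i : Fin m => ¬ (i : ℕ) < r), |M i j| := by
        rw [hsplit fun i => |M i j|]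
        rw [Finset.sum_eq_zero (fun i hi => by
          simp only [Finset.mem_filter] at hi
          rw [hM i hi.2 j, abs_zero]), zero_add]
      -- top rows: equal to v1 (Xh.mulVec y)
      have hS1 : (univ.filter (fun i : Fin m => (i : ℕ) < r)) =
          univ.map (Fin.castLEEmb hrm) := by
        ext i
        simp only [Finset.mem_filter, Finset.mem_univ, true_and, Finset.mem_map,
          Fin.castLEEmb, Function.Embedding.coeFn_mk]
        constructor
        · intro h; exact ⟨⟨i, h⟩, by simp [Fin.castLE, Fin.ext_iff]⟩
        · rintro ⟨a, rfl⟩; exact a.isLt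
      have hTop : ∑ i ∈ univ.filter (fun i : Fin m => (i : ℕ) < r),
          |(X * Yᵀ) i j - M i j| = v1 (Xh.mulVec y) := by
        rw [hS1, Finset.sum_map]
        refine Finset.sum_congr rfl fun i _ => ?_
        have hi : ((Fin.castLEEmb hrm i : Fin m) : ℕ) < r := by simp
        rw [hM _ hi j, sub_zero, hentry]
        simp [v1, Matrix.mulVec, dotProduct, hXhdef, Matrix.submatrix_apply,
          Fin.castLEEmb]
      -- bottom rows: lower bound
      have hBot : ∑ i ∈ univ.filter (fun i : Fin m => ¬ (i : ℕ) < r), (|M i j| - |(X * Yᵀ) i j|)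
          ≤ ∑ i ∈ univ.filter (fun i : Fin m => ¬ (i : ℕ) < r), |(X * Yᵀ) i j - M i j| := by
        refine Finset.sum_le_sum fun i _ => ?_
        calc |M i j| - |(X * Yᵀ) i j| ≤ |M i j - (X * Yᵀ) i j| := abs_sub_abs_le_abs_sub _ _
          _ = |(X * Yᵀ) i j - M i j| := abs_sub_comm _ _
      -- bound bottom leakage
      have hLeak : ∑ i ∈ univ.filter (fun i : Fin m => ¬ (i : ℕ) < r), |(X * Yᵀ) i j|
          ≤ (m : ℝ) * δ * v1 y := by
        have h1 : ∑ i ∈ univ.filter (fun i : Fin m => ¬ (i : ℕ) < r), |(X * Yᵀ) i j|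
            = ∑ i ∈ univ.filter (fun i : Fin m => ¬ (i : ℕ) < r), |∑ k, X i k * y k| := by
          exact Finset.sum_congr rfl fun i _ => by rw [hentry]
        rw [h1]
        calc ∑ i ∈ univ.filter (fun i : Fin m => ¬ (i : ℕ) < r), |∑ k, X i k * y k|
            ≤ (univ.filter (fun i : Fin m => ¬ (i : ℕ) < r)).card * δ * v1 y := by
              refine aux_sum _ _ _ _ fun i hi k => ?_
              simp only [Finset.mem_filter] at hi
              have h0 : Xs i k = 0 := hXs0 i (Nat.le_of_not_lt hi.2) k
              have h := hX i k
              rw [Matrix.sub_apply, h0, sub_zero] at h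
              exact h
          _ ≤ (m : ℝ) * δ * v1 y := by
              apply mul_le_mul_of_nonneg_right _ hvy
              apply mul_le_mul_of_nonneg_right _ (le_of_lt hδ)
              exact_mod_cast (Finset.card_filter_le _ _).trans (by simp)
      -- key lower bound for top
      have hKey : v1 y ≤ K * v1 (A.mulVec y) := by
        calc v1 y ≤ (∑ i, ∑ k, |B i k|) * v1 (A.mulVec y) := v1_le_of_leftInv A B hBA y
          _ ≤ K * v1 (A.mulVec y) := by
              apply mul_le_mul_of_nonneg_right _ (v1_nonneg _)
              rw [hKdef]; linarith
      have hPert : v1 (A.mulVec y) ≤ v1 (Xh.mulVec y) + (r : ℝ) * δ * v1 y := by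
        have hdecomp : A.mulVec y = Xh.mulVec y + (A - Xh).mulVec y := by
          rw [Matrix.sub_mulVec]
          abel
        calc v1 (A.mulVec y) ≤ v1 (Xh.mulVec y) + v1 ((A - Xh).mulVec y) := by
              rw [hdecomp]; exact v1_add_le _ _
          _ ≤ v1 (Xh.mulVec y) + (r : ℝ) * δ * v1 y := by
              gcongr v1 (Xh.mulVec y) + ?_
              have : v1 ((A - Xh).mulVec y) = ∑ i, |∑ k, (A - Xh) i k * y k| := by
                simp [v1, Matrix.mulVec, dotProduct]
              rw [this]
              have := aux_sum (univ : Finset (Fin r)) (fun i k => (A - Xh) i k) y δ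
                (fun i _ k => by
                  have h := hX (Fin.castLE hrm i) k
                  simp only [hAdef, hXhdef, Matrix.sub_apply, Matrix.submatrix_apply, id]
                  rw [abs_sub_comm]
                  simpa [Matrix.sub_apply] using h)
              simpa using this
      -- arithmetic on δ
      have hδarith : ((m : ℝ) + r) * δ ≤ 1 / K := by
        rw [hδdef, mul_one_div, div_le_div_iff₀ (by positivity) hK]
        nlinarith [hK]
      have hfinal : (m : ℝ) * δ * v1 y ≤ v1 (Xh.mulVec y) := by
        have h1 : v1 y / K ≤ v1 (A.mulVec y) := by
          rw [div_le_iff₀ hK]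
          linarith [hKey]
        have h2 : v1 y / K - (r : ℝ) * δ * v1 y ≤ v1 (Xh.mulVec y) := by linarith [hPert]
        have h3 : ((m : ℝ) + r) * δ * v1 y ≤ (1 / K) * v1 y :=
          mul_le_mul_of_nonneg_right hδarith hvy
        have h4 : (1 / K) * v1 y = v1 y / K := by ring
        nlinarith
      -- combine
      rw [hMside, hsplit fun i => |(X * Yᵀ) i j - M i j|, hTop]
      have := hBot
      rw [Finset.sum_sub_distrib] at this
      linarith [hLeak, hfinal, this]
    -- sum over columns
    have hL : l1norm (X * Yᵀ - M) = ∑ j, ∑ i, |(X * Yᵀ) i j - M i j| := by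
      rw [l1norm, Finset.sum_comm]
      exact Finset.sum_congr rfl fun j _ => Finset.sum_congr rfl fun i _ => by
        rw [Matrix.sub_apply]
    have hLM : l1norm M = ∑ j, ∑ i, |M i j| := by rw [l1norm, Finset.sum_comm]
    rw [hL, hLM]
    exact Finset.sum_le_sum fun j _ => hcol j
end

section
/- If M ≠ 0, then the local minimum (X*, Y*) of f(X,Y) = ‖XYᵀ − M‖₁ is spurious: there exist X̄ ∈ ℝ^{m×r} and Ȳ ∈ ℝ^{n×r} such that f(X̄, Ȳ) = ‖M‖₁ − |M_{ij}| < ‖M‖₁ = f(X*, Y*), where M_{ij} is any nonzero entry of M. In particular, X̄Ȳᵀ can be taken to be the rank-one matrix whose only nonzero entry is M_{ij} in position (i,j). -/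
open scoped Matrix

lemma l1norm_eq_sum_prod {m n : ℕ} (A : Matrix (Fin m) (Fin n) ℝ) :
    l1norm A = ∑ p : Fin m × Fin n, |A p.1 p.2| := by
  rw [l1norm, Fintype.sum_prod_type]

/-- If `M ≠ 0` (witnessed by a nonzero entry `M_{ij}`), then the local minimum `(X*, Y*)` of
`f(X,Y) = ‖XYᵀ − M‖₁` is spurious: there exist `X̄ ∈ ℝ^{m×r}` and `Ȳ ∈ ℝ^{n×r}` such that
`X̄Ȳᵀ` is the rank-one matrix whose only nonzero entry is `M_{ij}` in position `(i,j)`, and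
`f(X̄,Ȳ) = ‖M‖₁ − |M_{ij}| < ‖M‖₁ = f(X*,Y*)`. -/
theorem stmt13 (m n r : ℕ) (hm : 0 < m) (hn : 0 < n) (hr : 0 < r) (hrm : r ≤ m)
    (M : Matrix (Fin m) (Fin n) ℝ) (hMne : M ≠ 0)
    (hM : ∀ i : Fin m, (i : ℕ) < r → ∀ j, M i j = 0)
    (Xs : Matrix (Fin m) (Fin r) ℝ)
    (hXsInv : IsUnit (Xs.submatrix (Fin.castLE hrm) id))
    (hXs0 : ∀ i : Fin m, r ≤ (i : ℕ) → ∀ j, Xs i j = 0)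
    (i : Fin m) (j : Fin n) (hij : M i j ≠ 0) :
    ∃ (Xb : Matrix (Fin m) (Fin r) ℝ) (Yb : Matrix (Fin n) (Fin r) ℝ),
      Xb * Ybᵀ = Matrix.single i j (M i j) ∧
      l1norm (Xb * Ybᵀ - M) = l1norm M - |M i j| ∧
      l1norm M - |M i j| < l1norm M ∧
      l1norm (Xs * (0 : Matrix (Fin n) (Fin r) ℝ)ᵀ - M) = l1norm M := by
  set k : Fin r := ⟨0, hr⟩
  have heq : Matrix.single i k (1 : ℝ) * (Matrix.single j k (M i j))ᵀ
      = Matrix.single i j (M i j) := by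
    ext a b
    by_cases ha : i = a <;> by_cases hb : j = b <;>
      simp [Matrix.mul_apply, Matrix.single, Matrix.transpose_apply, ha, hb,
        Finset.sum_ite_eq, ite_and]
  refine ⟨Matrix.single i k (1 : ℝ), Matrix.single j k (M i j), heq, ?_, ?_, ?_⟩
  · rw [heq]
    rw [l1norm_eq_sum_prod, l1norm_eq_sum_prod]
    have : ∀ p : Fin m × Fin n,
        |(Matrix.single i j (M i j) - M) p.1 p.2|
          = |M p.1 p.2| - (if p = (i, j) then |M i j| else 0) := by
      rintro ⟨a, b⟩
      by_cases h : (a, b) = (i, j)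
      · obtain ⟨rfl, rfl⟩ := Prod.mk.injEq .. ▸ h
        simp [Matrix.single]
      · have hab : ¬(i = a ∧ j = b) := by
          intro ⟨h1, h2⟩; exact h (by simp [h1.symm, h2.symm])
        simp [Matrix.single, h, Matrix.sub_apply, if_neg hab]
    simp only [this, Finset.sum_sub_distrib, Finset.sum_ite_eq' Finset.univ (i, j)
      (fun _ => |M i j|), Finset.mem_univ, if_true]
  · have : 0 < |M i j| := abs_pos.mpr hij
    linarith
  · simp only [Matrix.transpose_zero, Matrix.mul_zero, zero_sub]
    rw [l1norm, l1norm]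
    simp [abs_neg]
end

section
/- There exists δ > 0 such that for all X ∈ ℝ^{m×r} and Y ∈ ℝ^{n×r} with every entry of X − X* and of Y of absolute value at most δ, one has ‖XYᵀ − M‖₁ = ‖M‖₁ if and only if Y = 0. In other words, near (X*, 0) the level set {f = ‖M‖₁} of f(X,Y) = ‖XYᵀ − M‖₁ coincides with the set {(X,Y) : Y = 0}. -/
open scoped Matrix

/-- Let `M ∈ ℝ^{m×n}` have its first `r` rows zero, and let `X* ∈ ℝ^{m×r}` have its first
`r` rows forming an invertible matrix `X̂*` and its remaining rows zero. There exists `δ > 0`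
such that for all `X ∈ ℝ^{m×r}` and `Y ∈ ℝ^{n×r}` with every entry of `X − X*` and of `Y` of
absolute value at most `δ`, one has `‖XYᵀ − M‖₁ = ‖M‖₁` if and only if `Y = 0`: near
`(X*, 0)` the level set `{f = ‖M‖₁}` of `f(X,Y) = ‖XYᵀ − M‖₁` is the set `{(X,Y) : Y = 0}`. -/
theorem stmt14 (m n r : ℕ) (hm : 0 < m) (hn : 0 < n) (hr : 0 < r) (hrm : r ≤ m)
    (M : Matrix (Fin m) (Fin n) ℝ)
    (hM : ∀ i : Fin m, (i : ℕ) < r → ∀ j, M i j = 0)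
    (Xs : Matrix (Fin m) (Fin r) ℝ)
    (hXsInv : IsUnit (Xs.submatrix (Fin.castLE hrm) id))
    (hXs0 : ∀ i : Fin m, r ≤ (i : ℕ) → ∀ j, Xs i j = 0) :
    ∃ δ > 0, ∀ (X : Matrix (Fin m) (Fin r) ℝ) (Y : Matrix (Fin n) (Fin r) ℝ),
      (∀ i j, |(X - Xs) i j| ≤ δ) → (∀ i j, |Y i j| ≤ δ) →
      (l1norm (X * Yᵀ - M) = l1norm M ↔ Y = 0) := by
  classical
  set A : Matrix (Fin r) (Fin r) ℝ := Xs.submatrix (Fin.castLE hrm) id with hAdef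
  have hdet : IsUnit A.det := (Matrix.isUnit_iff_isUnit_det A).mp hXsInv
  have hinv : A⁻¹ * A = 1 := Matrix.nonsing_inv_mul A hdet
  set B : ℝ := 1 + ∑ k : Fin r, ∑ i : Fin r, |A⁻¹ k i| with hBdef
  have hB1 : (1 : ℝ) ≤ B := by
    have h0 : (0 : ℝ) ≤ ∑ k : Fin r, ∑ i : Fin r, |A⁻¹ k i| :=
      Finset.sum_nonneg fun _ _ => Finset.sum_nonneg fun _ _ => abs_nonneg _
    simp only [hBdef]; linarith
  have hBpos : (0 : ℝ) < B := lt_of_lt_of_le one_pos hB1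
  have hBk : ∀ k i : Fin r, |A⁻¹ k i| ≤ B := by
    intro k i
    have h1 : |A⁻¹ k i| ≤ ∑ i' : Fin r, |A⁻¹ k i'| :=
      Finset.single_le_sum (f := fun i' => |A⁻¹ k i'|) (fun _ _ => abs_nonneg _)
        (Finset.mem_univ i)
    have h2 : (∑ i' : Fin r, |A⁻¹ k i'|) ≤ ∑ k' : Fin r, ∑ i' : Fin r, |A⁻¹ k' i'| :=
      Finset.single_le_sum (f := fun k' => ∑ i' : Fin r, |A⁻¹ k' i'|)
        (fun _ _ => Finset.sum_nonneg fun _ _ => abs_nonneg _) (Finset.mem_univ k)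
    simp only [hBdef]; linarith
  have hrpos : (0 : ℝ) < (r : ℝ) := by exact_mod_cast hr
  have hmpos : (0 : ℝ) < (m : ℝ) := by exact_mod_cast hm
  set δ : ℝ := 1 / (4 * B * ((r : ℝ) + (m : ℝ)) * (r : ℝ)) with hδdef
  have hδpos : 0 < δ := by
    have h0 : (0 : ℝ) < 4 * B * ((r : ℝ) + (m : ℝ)) * (r : ℝ) :=
      mul_pos (mul_pos (mul_pos (by norm_num) hBpos) (by positivity)) hrpos
    exact hδdef ▸ one_div_pos.mpr h0
  have hδval : δ * (4 * B * ((r : ℝ) + (m : ℝ)) * (r : ℝ)) = 1 := by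
    have h0 : (4 * B * ((r : ℝ) + (m : ℝ)) * (r : ℝ)) ≠ 0 :=
      (mul_pos (mul_pos (mul_pos (by norm_num) hBpos) (by positivity)) hrpos).ne'
    rw [hδdef]
    field_simp
  clear_value A B δ
  refine ⟨δ, hδpos, ?_⟩
  intro X Y hX hY
  constructor
  · -- hard direction
    intro heq
    by_contra hY0
    set P : Matrix (Fin m) (Fin n) ℝ := X * Yᵀ with hP
    have hPapp : ∀ (i : Fin m) (j : Fin n), P i j = ∑ k, X i k * Y j k := by
      intro i j
      simp [hP, Matrix.mul_apply]
    clear_value P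
    set YN : ℝ := ∑ j : Fin n, ∑ k : Fin r, |Y j k| with hYN
    clear_value YN
    have hYNnn : 0 ≤ YN := by
      rw [hYN]
      exact Finset.sum_nonneg fun _ _ => Finset.sum_nonneg fun _ _ => abs_nonneg _
    have hYNpos : 0 < YN := by
      obtain ⟨j, k, hjk⟩ : ∃ j k, Y j k ≠ 0 := by
        by_contra hcon
        push_neg at hcon
        exact hY0 (by ext j k; simpa using hcon j k)
      have h1 : 0 < |Y j k| := abs_pos.mpr hjk
      have h2 : |Y j k| ≤ ∑ k', |Y j k'| :=
        Finset.single_le_sum (f := fun k' => |Y j k'|) (fun _ _ => abs_nonneg _)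
          (Finset.mem_univ k)
      have h3 : (∑ k', |Y j k'|) ≤ YN := by
        rw [hYN]
        exact Finset.single_le_sum (f := fun j' => ∑ k' : Fin r, |Y j' k'|)
          (fun _ _ => Finset.sum_nonneg fun _ _ => abs_nonneg _) (Finset.mem_univ j)
      linarith
    -- entrywise bounds on X
    have hXtop : ∀ (i : Fin r) (k : Fin r), |X (Fin.castLE hrm i) k - A i k| ≤ δ := by
      intro i k
      have := hX (Fin.castLE hrm i) k
      simpa [hAdef, Matrix.sub_apply, Matrix.submatrix_apply] using this
    have hXbot : ∀ (i : Fin m), r ≤ (i : ℕ) → ∀ k, |X i k| ≤ δ := by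
      intro i hi k
      have := hX i k
      simpa [Matrix.sub_apply, hXs0 i hi k] using this
    -- Step A : bottom rows of P are small
    have stepA : ∀ (i : Fin m), r ≤ (i : ℕ) → ∀ j, |P i j| ≤ δ * ∑ k, |Y j k| := by
      intro i hi j
      rw [hPapp]
      calc |∑ k, X i k * Y j k| ≤ ∑ k, |X i k * Y j k| := Finset.abs_sum_le_sum_abs _ _
        _ ≤ ∑ k, δ * |Y j k| := by
            refine Finset.sum_le_sum fun k _ => ?_
            rw [abs_mul]
            exact mul_le_mul_of_nonneg_right (hXbot i hi k) (abs_nonneg _)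
        _ = δ * ∑ k, |Y j k| := by rw [Finset.mul_sum]
    -- identity expressing Y through A⁻¹
    have hid : ∀ (j : Fin n) (k : Fin r),
        Y j k = ∑ i : Fin r, A⁻¹ k i * ∑ k', A i k' * Y j k' := by
      intro j k
      have h1 : (A⁻¹ * (A * Yᵀ)) k j = Y j k := by
        rw [← Matrix.mul_assoc, hinv, Matrix.one_mul, Matrix.transpose_apply]
      rw [← h1, Matrix.mul_apply]
      refine Finset.sum_congr rfl fun i _ => ?_
      rw [Matrix.mul_apply]
      simp [Matrix.transpose_apply]
    have hAY : ∀ (i : Fin r) (j : Fin n),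
        |∑ k', A i k' * Y j k'| ≤ |P (Fin.castLE hrm i) j| + δ * ∑ k', |Y j k'| := by
      intro i j
      have hsplit : ∑ k', A i k' * Y j k'
          = P (Fin.castLE hrm i) j - ∑ k', (X (Fin.castLE hrm i) k' - A i k') * Y j k' := by
        rw [hPapp, ← Finset.sum_sub_distrib]
        refine Finset.sum_congr rfl fun k' _ => ?_
        ring
      rw [hsplit]
      have h2 : |∑ k', (X (Fin.castLE hrm i) k' - A i k') * Y j k'| ≤ δ * ∑ k', |Y j k'| := by
        calc |∑ k', (X (Fin.castLE hrm i) k' - A i k') * Y j k'|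
            ≤ ∑ k', |(X (Fin.castLE hrm i) k' - A i k') * Y j k'| :=
              Finset.abs_sum_le_sum_abs _ _
          _ ≤ ∑ k', δ * |Y j k'| := by
              refine Finset.sum_le_sum fun k' _ => ?_
              rw [abs_mul]
              exact mul_le_mul_of_nonneg_right (hXtop i k') (abs_nonneg _)
          _ = δ * ∑ k', |Y j k'| := by rw [Finset.mul_sum]
      calc |P (Fin.castLE hrm i) j - ∑ k', (X (Fin.castLE hrm i) k' - A i k') * Y j k'|
          ≤ |P (Fin.castLE hrm i) j| + |∑ k', (X (Fin.castLE hrm i) k' - A i k') * Y j k'| :=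
            abs_sub _ _
        _ ≤ |P (Fin.castLE hrm i) j| + δ * ∑ k', |Y j k'| := by linarith
    have stepB : ∀ (j : Fin n) (k : Fin r),
        |Y j k| ≤ B * (∑ i : Fin r, |P (Fin.castLE hrm i) j|)
          + (r : ℝ) * (B * (δ * ∑ k', |Y j k'|)) := by
      intro j k
      rw [hid j k]
      calc |∑ i : Fin r, A⁻¹ k i * ∑ k', A i k' * Y j k'|
          ≤ ∑ i : Fin r, |A⁻¹ k i * ∑ k', A i k' * Y j k'| := Finset.abs_sum_le_sum_abs _ _
        _ ≤ ∑ i : Fin r, (B * |P (Fin.castLE hrm i) j| + B * (δ * ∑ k', |Y j k'|)) := by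
            refine Finset.sum_le_sum fun i _ => ?_
            rw [abs_mul]
            have h1 := hAY i j
            have h2 := hBk k i
            have h3 : |A⁻¹ k i| * |∑ k', A i k' * Y j k'|
                ≤ B * (|P (Fin.castLE hrm i) j| + δ * ∑ k', |Y j k'|) := by
              have := mul_le_mul h2 h1 (abs_nonneg _)
                (by positivity)
              linarith
            linarith [h3]
        _ = B * (∑ i : Fin r, |P (Fin.castLE hrm i) j|)
            + (r : ℝ) * (B * (δ * ∑ k', |Y j k'|)) := by
            rw [Finset.sum_add_distrib, ← Finset.mul_sum, Finset.sum_const, Finset.card_univ,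
              Fintype.card_fin, nsmul_eq_mul]
    set S : ℝ := ∑ i : Fin r, ∑ j : Fin n, |P (Fin.castLE hrm i) j| with hSdef
    clear_value S
    have hSnn : 0 ≤ S := by
      rw [hSdef]
      exact Finset.sum_nonneg fun _ _ => Finset.sum_nonneg fun _ _ => abs_nonneg _
    have stepB' : YN ≤ (r : ℝ) * B * S + (r : ℝ) * (r : ℝ) * B * δ * YN := by
      have h1 : YN ≤ ∑ j : Fin n, ∑ k : Fin r,
          (B * (∑ i : Fin r, |P (Fin.castLE hrm i) j|)
            + (r : ℝ) * (B * (δ * ∑ k', |Y j k'|))) := by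
        rw [hYN]
        exact Finset.sum_le_sum fun j _ => Finset.sum_le_sum fun k _ => stepB j k
      have h2 : ∑ j : Fin n, ∑ k : Fin r,
          (B * (∑ i : Fin r, |P (Fin.castLE hrm i) j|)
            + (r : ℝ) * (B * (δ * ∑ k', |Y j k'|)))
          = (r : ℝ) * B * S + (r : ℝ) * (r : ℝ) * B * δ * YN := by
        have h3 : ∀ j : Fin n, ∑ k : Fin r,
            (B * (∑ i : Fin r, |P (Fin.castLE hrm i) j|)
              + (r : ℝ) * (B * (δ * ∑ k', |Y j k'|)))
            = (r : ℝ) * (B * (∑ i : Fin r, |P (Fin.castLE hrm i) j|))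
              + (r : ℝ) * ((r : ℝ) * (B * (δ * ∑ k', |Y j k'|))) := by
          intro j
          rw [Finset.sum_const, Finset.card_univ, Fintype.card_fin, nsmul_eq_mul, mul_add]
        rw [Finset.sum_congr rfl fun j _ => h3 j, Finset.sum_add_distrib]
        have h4 : ∑ j : Fin n, (r : ℝ) * (B * (∑ i : Fin r, |P (Fin.castLE hrm i) j|))
            = (r : ℝ) * B * S := by
          rw [← Finset.mul_sum, ← Finset.mul_sum, hSdef, Finset.sum_comm]
          ring
        have h5 : ∑ j : Fin n, (r : ℝ) * ((r : ℝ) * (B * (δ * ∑ k', |Y j k'|)))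
            = (r : ℝ) * (r : ℝ) * B * δ * YN := by
          rw [← Finset.mul_sum, ← Finset.mul_sum, ← Finset.mul_sum, ← Finset.mul_sum, hYN]
          ring
        rw [h4, h5]
      linarith [h1, le_of_eq h2]
    -- numerics
    have hBne : B ≠ 0 := hBpos.ne'
    have hrne : (r : ℝ) ≠ 0 := hrpos.ne'
    have hrmne : (r : ℝ) + (m : ℝ) ≠ 0 := by positivity
    have hnum1 : (r : ℝ) * (r : ℝ) * B * δ ≤ 1 / 4 := by
      have e : (r : ℝ) * (r : ℝ) * B * δ = (r : ℝ) / (4 * ((r : ℝ) + (m : ℝ))) := by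
        rw [hδdef]
        field_simp
      rw [e, div_le_div_iff₀ (by positivity) (by positivity)]
      linarith
    have hnum2 : (r : ℝ) * B * (δ * (m : ℝ)) ≤ 1 / 4 := by
      have e : (r : ℝ) * B * (δ * (m : ℝ)) = (m : ℝ) / (4 * ((r : ℝ) + (m : ℝ))) := by
        rw [hδdef]
        field_simp
      rw [e, div_le_div_iff₀ (by positivity) (by positivity)]
      linarith
    have hS_lb : 3 / 4 * YN ≤ (r : ℝ) * B * S := by
      have : (r : ℝ) * (r : ℝ) * B * δ * YN ≤ 1 / 4 * YN :=
        mul_le_mul_of_nonneg_right hnum1 hYNnn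
      linarith [stepB']
    -- Step C : lower bound on l1norm (P - M)
    have aux : ∀ a : Fin m → ℝ,
        (∑ i : Fin m, (if (i : ℕ) < r then a i else 0))
          = ∑ i₀ : Fin r, a (Fin.castLE hrm i₀) := by
      intro a
      set g : ℕ → ℝ := fun t => if h : t < m then (if t < r then a ⟨t, h⟩ else 0) else 0 with hg
      have h1 : (∑ i : Fin m, (if (i : ℕ) < r then a i else 0)) = ∑ t ∈ Finset.range m, g t := by
        rw [← Fin.sum_univ_eq_sum_range]
        refine Finset.sum_congr rfl fun i _ => ?_
        simp [hg, i.isLt]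
      have h2 : (∑ i₀ : Fin r, a (Fin.castLE hrm i₀)) = ∑ t ∈ Finset.range r, g t := by
        rw [← Fin.sum_univ_eq_sum_range]
        refine Finset.sum_congr rfl fun i₀ _ => ?_
        have hlt : (i₀ : ℕ) < m := lt_of_lt_of_le i₀.isLt hrm
        simp [hg, hlt, i₀.isLt]
        rfl
      rw [h1, h2]
      refine (Finset.sum_subset (Finset.range_subset_range.mpr hrm) ?_).symm
      intro t htm htr
      have h3 : ¬ t < r := by simpa using htr
      simp [hg, h3]
    have stepC : l1norm M + (S - δ * (m : ℝ) * YN) ≤ l1norm (P - M) := by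
      have hpt : ∀ (i : Fin m) (j : Fin n),
          |M i j| + (if (i : ℕ) < r then |P i j| else -(δ * ∑ k, |Y j k|))
            ≤ |(P - M) i j| := by
        intro i j
        by_cases hi : (i : ℕ) < r
        · simp only [hi, if_true, Matrix.sub_apply]
          rw [hM i hi j]
          simp
        · have hi' : r ≤ (i : ℕ) := le_of_not_gt hi
          simp only [hi, if_false, Matrix.sub_apply]
          have h1 := stepA i hi' j
          have h2 : |M i j| - |P i j| ≤ |P i j - M i j| := by
            have := abs_sub_abs_le_abs_sub (M i j) (P i j)
            rw [abs_sub_comm] at this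
            linarith
          linarith
      have hsum : l1norm M
          + ∑ i : Fin m, ∑ j : Fin n, (if (i : ℕ) < r then |P i j| else -(δ * ∑ k, |Y j k|))
          ≤ l1norm (P - M) := by
        have := Finset.sum_le_sum (fun i (_ : i ∈ (Finset.univ : Finset (Fin m))) =>
          Finset.sum_le_sum (fun j (_ : j ∈ (Finset.univ : Finset (Fin n))) => hpt i j))
        simp only [Finset.sum_add_distrib] at this
        simpa [l1norm, Finset.sum_add_distrib] using this
      have hrow : ∀ i : Fin m,
          (∑ j : Fin n, (if (i : ℕ) < r then |P i j| else -(δ * ∑ k, |Y j k|)))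
            = (if (i : ℕ) < r then ∑ j, |P i j| else -(δ * YN)) := by
        intro i
        by_cases hi : (i : ℕ) < r
        · simp [hi]
        · simp only [hi, if_false]
          simp only [hYN, Finset.sum_neg_distrib, ← Finset.mul_sum]
      have hmid : (∑ i : Fin m, (if (i : ℕ) < r then ∑ j, |P i j| else -(δ * YN)))
          ≥ S - δ * (m : ℝ) * YN := by
        have h1 : ∀ i : Fin m,
            (if (i : ℕ) < r then ∑ j, |P i j| else 0) - δ * YN
              ≤ (if (i : ℕ) < r then ∑ j, |P i j| else -(δ * YN)) := by
          intro i
          by_cases hi : (i : ℕ) < r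
          · simp only [hi, if_true]
            nlinarith [hδpos.le, hYNnn]
          · simp [hi]
        have h2 := Finset.sum_le_sum fun i (_ : i ∈ (Finset.univ : Finset (Fin m))) => h1 i
        rw [Finset.sum_sub_distrib, Finset.sum_const, Finset.card_univ, Fintype.card_fin,
          nsmul_eq_mul] at h2
        rw [aux (fun i => ∑ j, |P i j|)] at h2
        rw [← hSdef] at h2
        calc S - δ * (m : ℝ) * YN = S - (m : ℝ) * (δ * YN) := by ring
          _ ≤ _ := h2
      calc l1norm M + (S - δ * (m : ℝ) * YN)
          ≤ l1norm M + ∑ i : Fin m, (if (i : ℕ) < r then ∑ j, |P i j| else -(δ * YN)) := by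
            linarith [hmid]
        _ = l1norm M
            + ∑ i : Fin m, ∑ j : Fin n, (if (i : ℕ) < r then |P i j| else -(δ * ∑ k, |Y j k|)) := by
            rw [Finset.sum_congr rfl fun i _ => (hrow i).symm]
        _ ≤ l1norm (P - M) := hsum
    -- combine
    have hfin : S ≤ δ * (m : ℝ) * YN := by
      rw [heq] at stepC
      linarith
    have h1 : (r : ℝ) * B * S ≤ (r : ℝ) * B * (δ * (m : ℝ) * YN) := by
      exact mul_le_mul_of_nonneg_left hfin (mul_pos hrpos hBpos).le
    have h2 : (r : ℝ) * B * (δ * (m : ℝ) * YN) ≤ 1 / 4 * YN := by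
      have : (r : ℝ) * B * (δ * (m : ℝ) * YN) = ((r : ℝ) * B * (δ * (m : ℝ))) * YN := by ring
      rw [this]
      exact mul_le_mul_of_nonneg_right hnum2 hYNnn
    linarith [hS_lb, h1, h2]
  · rintro rfl
    simp [l1norm, Matrix.sub_apply]
end

section
/- There exist δ > 0 and c > 0 such that for every X̂ ∈ ℝ^{r×r} with all entries of X̂ − X̂* of absolute value at most δ, every Y ∈ ℝ^{n×r} with Y ≠ 0 and all entries of absolute value at most δ, and every Λ̂ ∈ sign(X̂Yᵀ), one has ‖Λ̂ᵀX̂‖_F ≥ c. -/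
open scoped Matrix

/-- The squared Frobenius norm of a real matrix: `‖A‖_F² = Σ_{i,j} A_{ij}²`. -/
noncomputable def frobSq {m n : ℕ} (A : Matrix (Fin m) (Fin n) ℝ) : ℝ :=
  ∑ i, ∑ j, (A i j) ^ 2

/-- The Frobenius norm of a real matrix. -/
noncomputable def frobNorm {m n : ℕ} (A : Matrix (Fin m) (Fin n) ℝ) : ℝ :=
  Real.sqrt (frobSq A)

/-- The set-valued entrywise sign: `Λ ∈ sign(B)` iff for every entry, `Λ_{ij} = 1` if
`B_{ij} > 0`, `Λ_{ij} = −1` if `B_{ij} < 0`, and `Λ_{ij} ∈ [−1,1]` if `B_{ij} = 0`. -/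
def signSet {m n : ℕ} (B : Matrix (Fin m) (Fin n) ℝ) : Set (Matrix (Fin m) (Fin n) ℝ) :=
  {L | ∀ i j, (0 < B i j → L i j = 1) ∧ (B i j < 0 → L i j = -1) ∧
    (B i j = 0 → L i j ∈ Set.Icc (-1 : ℝ) 1)}

section
attribute [local instance] Matrix.frobeniusNormedAddCommGroup

lemma frobNorm_eq {m n : ℕ} (A : Matrix (Fin m) (Fin n) ℝ) : frobNorm A = ‖A‖ := by
  rw [Matrix.frobenius_norm_def, frobNorm, frobSq, Real.sqrt_eq_rpow]
  congr 1
  simp_rw [show ((2:ℝ) = ((2:ℕ):ℝ)) by norm_num, Real.rpow_natCast, Real.norm_eq_abs, sq_abs]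

lemma norm_le_of_entry {m n : ℕ} (A : Matrix (Fin m) (Fin n) ℝ) (δ : ℝ) (hδ : 0 ≤ δ)
    (h : ∀ i j, |A i j| ≤ δ) : ‖A‖ ≤ (m * n : ℕ) * δ := by
  rw [← frobNorm_eq, frobNorm]
  have h1 : frobSq A ≤ ((m * n : ℕ) * δ) ^ 2 := by
    have : frobSq A ≤ ∑ _i : Fin m, ∑ _j : Fin n, δ ^ 2 := by
      apply Finset.sum_le_sum; intro i _; apply Finset.sum_le_sum; intro j _
      calc (A i j) ^ 2 = |A i j| ^ 2 := (sq_abs _).symm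
        _ ≤ δ ^ 2 := by apply pow_le_pow_left₀ (abs_nonneg _) (h i j)
    refine this.trans ?_
    simp only [Finset.sum_const, Finset.card_univ, Fintype.card_fin, nsmul_eq_mul]
    have hk : ((m*n : ℕ):ℝ) ≤ (((m*n : ℕ):ℝ)) ^ 2 := by
      exact_mod_cast Nat.le_self_pow two_ne_zero (m*n)
    push_cast at hk ⊢
    nlinarith [sq_nonneg δ]
  calc Real.sqrt (frobSq A) ≤ Real.sqrt (((m * n : ℕ) * δ) ^ 2) := Real.sqrt_le_sqrt h1
    _ = (m * n : ℕ) * δ := Real.sqrt_sq (by positivity)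

/-- Let `X̂* ∈ ℝ^{r×r}` be invertible. There exist `δ > 0` and `c > 0` such that for every
`X̂ ∈ ℝ^{r×r}` with all entries of `X̂ − X̂*` of absolute value at most `δ`, every `Y ∈ ℝ^{n×r}`
with `Y ≠ 0` and all entries of absolute value at most `δ`, and every `Λ̂ ∈ sign(X̂Yᵀ)`,
one has `‖Λ̂ᵀX̂‖_F ≥ c`. -/
theorem stmt16 (r n : ℕ) (hr : 0 < r) (hn : 0 < n)
    (Xhs : Matrix (Fin r) (Fin r) ℝ) (hXhs : IsUnit Xhs) :
    ∃ δ > 0, ∃ c > 0, ∀ Xh : Matrix (Fin r) (Fin r) ℝ,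
      (∀ i j, |(Xh - Xhs) i j| ≤ δ) →
      ∀ Y : Matrix (Fin n) (Fin r) ℝ, Y ≠ 0 → (∀ i j, |Y i j| ≤ δ) →
      ∀ L ∈ signSet (Xh * Yᵀ), c ≤ frobNorm (Lᵀ * Xh) := by
  have hdet : IsUnit Xhs.det := (Matrix.isUnit_iff_isUnit_det _).mp hXhs
  have hinv : Xhs⁻¹ * Xhs = 1 := Matrix.nonsing_inv_mul _ hdet
  have hone : (1 : Matrix (Fin r) (Fin r) ℝ) ≠ 0 := by
    intro h
    have := congrFun (congrFun h ⟨0, hr⟩) ⟨0, hr⟩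
    simp [Matrix.one_apply] at this
  have hinvne : Xhs⁻¹ ≠ 0 := by
    intro h; rw [h, zero_mul] at hinv; exact hone hinv.symm
  set K : ℝ := ‖Xhs⁻¹‖ with hK
  have hKpos : 0 < K := norm_pos_iff.mpr hinvne
  have hrr : (0:ℝ) < (r * r : ℕ) := by positivity
  refine ⟨1 / (2 * K * (r * r : ℕ)), by positivity, 1 / (2 * K), by positivity, ?_⟩
  intro Xh hXh Y hY hYδ L hL
  set δ : ℝ := 1 / (2 * K * (r * r : ℕ))
  have hδpos : 0 < δ := by positivity
  set B : Matrix (Fin r) (Fin n) ℝ := Xh * Yᵀ with hB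
  -- entrywise: L i k * B i k = |B i k|
  have hsign : ∀ i k, L i k * B i k = |B i k| := by
    intro i k
    obtain ⟨h1, h2, h3⟩ := hL i k
    rcases lt_trichotomy (B i k) 0 with h | h | h
    · rw [h2 h, abs_of_neg h]; ring
    · rw [h, abs_zero, mul_zero]
    · rw [h1 h, abs_of_pos h]; ring
  set T : ℝ := ∑ i, ∑ k, |B i k| with hT
  -- Step A : ‖B‖ ≤ T
  have stepA : ‖B‖ ≤ T := by
    rw [← frobNorm_eq, frobNorm]
    have h1 : frobSq B ≤ T ^ 2 := by
      rw [frobSq, hT]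
      rw [← Finset.sum_product' (f := fun i k => (B i k)^2),
          ← Finset.sum_product' (f := fun i k => |B i k|)]
      calc (∑ p : Fin r × Fin n, (B p.1 p.2) ^ 2)
          = ∑ p : Fin r × Fin n, |B p.1 p.2| ^ 2 := by simp [sq_abs]
        _ ≤ (∑ p : Fin r × Fin n, |B p.1 p.2|) ^ 2 :=
            Finset.sum_sq_le_sq_sum_of_nonneg (fun _ _ => abs_nonneg _)
    have hTnn : 0 ≤ T := Finset.sum_nonneg fun _ _ => Finset.sum_nonneg fun _ _ => abs_nonneg _
    calc Real.sqrt (frobSq B) ≤ Real.sqrt (T ^ 2) := Real.sqrt_le_sqrt h1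
      _ = T := Real.sqrt_sq hTnn
  -- Step B : T = ∑ k, ∑ j, (Lᵀ*Xh) k j * Y k j
  have stepB : T = ∑ k, ∑ j, (Lᵀ * Xh) k j * Y k j := by
    rw [hT]
    simp_rw [← hsign, hB, Matrix.mul_apply, Matrix.transpose_apply, Finset.mul_sum,
      Finset.sum_mul]
    rw [Finset.sum_comm]
    congr 1; ext k
    rw [Finset.sum_comm]
    congr 1; ext j
    congr 1; ext i
    ring
  -- Step C : T ≤ ‖Lᵀ*Xh‖ * ‖Y‖
  have stepC : T ≤ ‖Lᵀ * Xh‖ * ‖Y‖ := by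
    rw [stepB, ← frobNorm_eq, ← frobNorm_eq, frobNorm, frobNorm, frobSq, frobSq]
    rw [← Finset.sum_product' (f := fun k j => (Lᵀ * Xh) k j * Y k j),
        ← Finset.sum_product' (f := fun k j => ((Lᵀ * Xh) k j)^2),
        ← Finset.sum_product' (f := fun k j => (Y k j)^2)]
    exact Real.sum_mul_le_sqrt_mul_sqrt _ _ _
  -- Step D : ‖Y‖ ≤ 2 * K * ‖B‖
  have hYt : ‖Yᵀ‖ = ‖Y‖ := Matrix.frobenius_norm_transpose Y
  have hEX : ‖Xhs - Xh‖ ≤ 1 / (2 * K) := by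
    have := norm_le_of_entry (Xhs - Xh) δ hδpos.le (by
      intro i j
      have := hXh i j
      rw [show (Xhs - Xh) i j = -((Xh - Xhs) i j) by simp [Matrix.sub_apply], abs_neg]
      exact this)
    refine this.trans ?_
    rw [show (((r * r : ℕ) : ℝ) * δ) = 1 / (2 * K) by
      show ((r * r : ℕ) : ℝ) * (1 / (2 * K * (r * r : ℕ))) = 1 / (2 * K)
      rw [mul_one_div, div_eq_div_iff (by positivity) (by positivity)]; ring]
  have stepD : ‖Y‖ ≤ 2 * K * ‖B‖ := by
    have hdecomp : Yᵀ = Xhs⁻¹ * ((Xhs - Xh) * Yᵀ) + Xhs⁻¹ * B := by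
      rw [hB, ← Matrix.mul_add, Matrix.sub_mul, sub_add_cancel, ← Matrix.mul_assoc, hinv,
        Matrix.one_mul]
    have h1 : ‖Yᵀ‖ ≤ K * (‖Xhs - Xh‖ * ‖Yᵀ‖) + K * ‖B‖ := by
      calc ‖Yᵀ‖ = ‖Xhs⁻¹ * ((Xhs - Xh) * Yᵀ) + Xhs⁻¹ * B‖ := by rw [← hdecomp]
        _ ≤ ‖Xhs⁻¹ * ((Xhs - Xh) * Yᵀ)‖ + ‖Xhs⁻¹ * B‖ := norm_add_le _ _
        _ ≤ K * ‖(Xhs - Xh) * Yᵀ‖ + K * ‖B‖ := by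
            gcongr <;> exact Matrix.frobenius_norm_mul _ _
        _ ≤ K * (‖Xhs - Xh‖ * ‖Yᵀ‖) + K * ‖B‖ := by
            gcongr; exact Matrix.frobenius_norm_mul _ _
    have h2 : K * (‖Xhs - Xh‖ * ‖Yᵀ‖) ≤ ‖Yᵀ‖ / 2 := by
      have := mul_le_mul_of_nonneg_right hEX (norm_nonneg Yᵀ)
      calc K * (‖Xhs - Xh‖ * ‖Yᵀ‖) ≤ K * (1 / (2 * K) * ‖Yᵀ‖) := by
            gcongr
        _ = ‖Yᵀ‖ / 2 := by first | (field_simp; ring) | field_simp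
    rw [← hYt]
    nlinarith [norm_nonneg B]
  -- conclude
  have hYpos : 0 < ‖Y‖ := norm_pos_iff.mpr hY
  rw [frobNorm_eq]
  have chain : ‖Y‖ / (2 * K) ≤ ‖Lᵀ * Xh‖ * ‖Y‖ := by
    have h1 : ‖Y‖ / (2 * K) ≤ ‖B‖ := by
      rw [div_le_iff₀ (by positivity)] at *
      nlinarith
    exact h1.trans (stepA.trans stepC)
  refine le_of_mul_le_mul_right ?_ hYpos
  calc 1 / (2 * K) * ‖Y‖ = ‖Y‖ / (2 * K) := by ring
    _ ≤ ‖Lᵀ * Xh‖ * ‖Y‖ := chain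

end
end

section
/- There exist δ > 0 and c > 0 such that for every X ∈ ℝ^{m×r} with all entries of X − X* of absolute value at most δ, every Y ∈ ℝ^{n×r} with Y ≠ 0 and all entries of absolute value at most δ, and every Λ ∈ sign(XYᵀ − M), one has ‖ΛᵀX‖_F² − ‖ΛY‖_F² ≥ c. -/
open scoped Matrix

lemma stmt17_aux (C M R N : ℝ) (hC : 1 ≤ C) (hM : 1 ≤ M) (hR : 1 ≤ R) (hN : 1 ≤ N) :
    1 ≤ C * (M + 1) * R * N ∧
    (M + 1) * R * (1 / (8 * (C * (M + 1) * R * N)) ^ 2) ≤ 1 / (2 * C) ∧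
    M * R * N ^ 2 * (1 / (8 * (C * (M + 1) * R * N)) ^ 2) ^ 2 ≤ 1 / (16 * C ^ 2 * R ^ 2) := by
  have hC0 : (0:ℝ) < C := by linarith
  have hR0 : (0:ℝ) < R := by linarith
  have hN0 : (0:ℝ) < N := by linarith
  have hM0 : (0:ℝ) < M := by linarith
  set P : ℝ := C * (M + 1) * R * N with hP
  have hP1 : (1:ℝ) ≤ P := by
    have h1 : (1:ℝ) ≤ C * (M + 1) := by nlinarith
    have h2 : (1:ℝ) ≤ C * (M + 1) * R := by nlinarith
    nlinarith
  have hP0 : (0:ℝ) < P := lt_of_lt_of_le one_pos hP1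
  have h8P : (0:ℝ) < 8 * P := by linarith
  have hCm : C * (M + 1) * R ≤ P := by
    rw [hP]
    nlinarith [mul_nonneg (mul_nonneg hC0.le (by linarith : (0:ℝ) ≤ M + 1)) hR0.le]
  have hQP : (M + 1) * R * N ≤ P := by
    rw [hP]
    nlinarith [mul_nonneg (mul_nonneg (by linarith : (0:ℝ) ≤ M + 1) hR0.le) hN0.le]
  have hle : M * R * N ^ 2 ≤ P ^ 2 := by
    have ha : M ≤ (M + 1) ^ 2 := by nlinarith
    have hb : R ≤ R ^ 2 := by nlinarith
    have h1 : M * R ≤ (M + 1) ^ 2 * R ^ 2 := mul_le_mul ha hb hR0.le (by positivity)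
    have h2 : M * R * N ^ 2 ≤ ((M + 1) ^ 2 * R ^ 2) * N ^ 2 :=
      mul_le_mul_of_nonneg_right h1 (sq_nonneg _)
    have h3 : ((M + 1) * R * N) * ((M + 1) * R * N) ≤ P * P :=
      mul_le_mul hQP hQP (by positivity) hP0.le
    nlinarith [h2, h3]
  have hCrP : C * R ≤ P := by
    rw [hP]
    nlinarith [mul_nonneg (mul_nonneg hC0.le hR0.le)
      (by nlinarith : (0:ℝ) ≤ (M + 1) * N - 1)]
  have h2P : C ^ 2 * R ^ 2 ≤ P ^ 2 := by
    nlinarith [mul_le_mul hCrP hCrP (mul_nonneg hC0.le hR0.le) hP0.le]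
  refine ⟨hP1, ?_, ?_⟩
  · rw [mul_one_div, div_le_div_iff₀ (pow_pos h8P 2) (by linarith)]
    nlinarith [hCm, hP1, hP0, mul_le_mul_of_nonneg_left hP1 hP0.le]
  · rw [div_pow, one_pow, mul_one_div,
      div_le_div_iff₀ (pow_pos (pow_pos h8P 2) 2) (by positivity)]
    nlinarith [mul_le_mul hle h2P (by positivity : (0:ℝ) ≤ C ^ 2 * R ^ 2)
      (by positivity : (0:ℝ) ≤ P ^ 2), sq_nonneg (P ^ 2), pow_pos hP0 2]

/-- Let `M ∈ ℝ^{m×n}` have its first `r` rows zero, and let `X* ∈ ℝ^{m×r}` have its first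
`r` rows forming an invertible matrix `X̂*` and its remaining rows zero. There exist `δ > 0`
and `c > 0` such that for every `X ∈ ℝ^{m×r}` with all entries of `X − X*` of absolute value
at most `δ`, every `Y ∈ ℝ^{n×r}` with `Y ≠ 0` and all entries of absolute value at most `δ`,
and every `Λ ∈ sign(XYᵀ − M)`, one has `‖ΛᵀX‖_F² − ‖ΛY‖_F² ≥ c`. -/
theorem stmt17 (m n r : ℕ) (hm : 0 < m) (hn : 0 < n) (hr : 0 < r) (hrm : r ≤ m)
    (M : Matrix (Fin m) (Fin n) ℝ)
    (hM : ∀ i : Fin m, (i : ℕ) < r → ∀ j, M i j = 0)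
    (Xs : Matrix (Fin m) (Fin r) ℝ)
    (hXsInv : IsUnit (Xs.submatrix (Fin.castLE hrm) id))
    (hXs0 : ∀ i : Fin m, r ≤ (i : ℕ) → ∀ j, Xs i j = 0) :
    ∃ δ > 0, ∃ c > 0, ∀ X : Matrix (Fin m) (Fin r) ℝ,
      (∀ i j, |(X - Xs) i j| ≤ δ) →
      ∀ Y : Matrix (Fin n) (Fin r) ℝ, Y ≠ 0 → (∀ i j, |Y i j| ≤ δ) →
      ∀ L ∈ signSet (X * Yᵀ - M), c ≤ frobSq (Lᵀ * X) - frobSq (L * Y) := by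
  -- cast facts
  have hm1 : (1:ℝ) ≤ (m:ℝ) := by exact_mod_cast hm
  have hn1 : (1:ℝ) ≤ (n:ℝ) := by exact_mod_cast hn
  have hr1 : (1:ℝ) ≤ (r:ℝ) := by exact_mod_cast hr
  have hr0 : (0:ℝ) < (r:ℝ) := by linarith
  set A : Matrix (Fin r) (Fin r) ℝ := Xs.submatrix (Fin.castLE hrm) id with hA
  have hdet : IsUnit A.det := (Matrix.isUnit_iff_isUnit_det A).mp hXsInv
  set B : Matrix (Fin r) (Fin r) ℝ := A⁻¹ with hB
  have hBA : B * A = 1 := Matrix.nonsing_inv_mul A hdet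
  set C : ℝ := 1 + ∑ i, ∑ k, |B i k| with hC
  have hC1 : 1 ≤ C := by
    have h0 : (0:ℝ) ≤ ∑ i, ∑ k, |B i k| :=
      Finset.sum_nonneg fun i _ => Finset.sum_nonneg fun k _ => abs_nonneg _
    simp only [hC]; linarith
  have hC0 : (0:ℝ) < C := lt_of_lt_of_le one_pos hC1
  have hrowB : ∀ k0 : Fin r, ∑ i, |B k0 i| ≤ C := by
    intro k0
    have h1 : ∑ i, |B k0 i| ≤ ∑ k, ∑ i, |B k i| :=
      Finset.single_le_sum (f := fun k => ∑ i, |B k i|)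
        (fun k _ => Finset.sum_nonneg fun i _ => abs_nonneg _) (Finset.mem_univ k0)
    have h2 : ∑ k : Fin r, ∑ i, |B k i| = ∑ i, ∑ k, |B i k| := rfl
    linarith [h1]
  -- constants
  obtain ⟨hP1', hδkey', hδ2'⟩ := stmt17_aux C (m:ℝ) (r:ℝ) (n:ℝ) hC1 hm1 hr1 hn1
  set P : ℝ := C * ((m:ℝ) + 1) * (r:ℝ) * (n:ℝ) with hP
  have hP1 : (1:ℝ) ≤ P := hP1'
  have hP0 : (0:ℝ) < P := lt_of_lt_of_le one_pos hP1
  have h8P : (0:ℝ) < 8 * P := by linarith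
  set δ : ℝ := 1 / (8 * P)^2 with hδdef
  set c : ℝ := 1 / (8 * C^2 * (r:ℝ)^2) with hcdef
  have hC2r2 : (0:ℝ) < C^2 * (r:ℝ)^2 := mul_pos (pow_pos hC0 2) (pow_pos hr0 2)
  have h8K : (0:ℝ) < 8 * C^2 * (r:ℝ)^2 := by linarith [hC2r2]
  have hδ0 : 0 < δ := div_pos one_pos (pow_pos h8P 2)
  have hc0 : 0 < c := div_pos one_pos h8K
  have hδkey : ((m:ℝ) + 1) * (r:ℝ) * δ ≤ 1 / (2 * C) := hδkey'
  have hδ2 : (m:ℝ) * (r:ℝ) * (n:ℝ)^2 * δ^2 ≤ 1 / (16 * C^2 * (r:ℝ)^2) := hδ2'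
  have hc2 : 2 * c = 1 / (4 * C^2 * (r:ℝ)^2) := by
    rw [hcdef, mul_one_div, div_eq_div_iff h8K.ne' (by linarith [hC2r2] : (0:ℝ) < 4 * C^2 * (r:ℝ)^2).ne']
    ring
  have hc_half : c / 2 = 1 / (16 * C^2 * (r:ℝ)^2) := by
    rw [hcdef, div_div, div_eq_div_iff (by linarith [hC2r2] : (0:ℝ) < 8 * C^2 * (r:ℝ)^2 * 2).ne' (by linarith [hC2r2] : (0:ℝ) < 16 * C^2 * (r:ℝ)^2).ne']
    ring
  clear_value A B C P δ c
  refine ⟨δ, hδ0, c, hc0, ?_⟩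
  intro X hX Y hYne hYδ L hL
  -- L has entries bounded by 1
  have habsL : ∀ i j', |L i j'| ≤ 1 := by
    intro i j'
    obtain ⟨h1, h2, h3⟩ := hL i j'
    rcases lt_trichotomy ((X * Yᵀ - M) i j') 0 with h | h | h
    · rw [h2 h]; norm_num
    · obtain ⟨ha, hb⟩ := h3 h
      rw [abs_le]; exact ⟨ha, hb⟩
    · rw [h1 h]; norm_num
  -- a nonzero entry of Y
  have hex : ∃ j k, Y j k ≠ 0 := by
    by_contra hcon
    push_neg at hcon
    exact hYne (by ext j k; simpa using hcon j k)
  obtain ⟨j, k', hjk⟩ := hex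
  obtain ⟨k0, -, hk0⟩ := Finset.exists_max_image Finset.univ (fun k => |Y j k|)
    ⟨k', Finset.mem_univ k'⟩
  set t : ℝ := |Y j k0| with ht
  have ht0 : 0 < t := lt_of_lt_of_le (abs_pos.mpr hjk) (hk0 k' (Finset.mem_univ k'))
  have hty : ∀ k, |Y j k| ≤ t := fun k => hk0 k (Finset.mem_univ k)
  set y : Fin r → ℝ := fun k => Y j k with hy
  obtain ⟨i0', -, hi0'⟩ := Finset.exists_max_image Finset.univ (fun i => |(A *ᵥ y) i|)
    ⟨⟨0, hr⟩, Finset.mem_univ _⟩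
  set s : ℝ := |(A *ᵥ y) i0'| with hs
  have hs0 : 0 ≤ s := abs_nonneg _
  -- t ≤ C * s
  have htCs : t ≤ C * s := by
    have h1 : y k0 = ∑ i, B k0 i * (A *ᵥ y) i := by
      have h2 : (B *ᵥ (A *ᵥ y)) k0 = y k0 := by
        rw [Matrix.mulVec_mulVec, hBA, Matrix.one_mulVec]
      rw [← h2]
      simp [Matrix.mulVec, dotProduct]
    have h3 : t ≤ ∑ i, |B k0 i| * s := by
      calc t = |y k0| := rfl
        _ = |∑ i, B k0 i * (A *ᵥ y) i| := by rw [h1]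
        _ ≤ ∑ i, |B k0 i * (A *ᵥ y) i| := Finset.abs_sum_le_sum_abs _ _
        _ ≤ ∑ i, |B k0 i| * s := by
            apply Finset.sum_le_sum
            intro i _
            rw [abs_mul]
            exact mul_le_mul_of_nonneg_left (hi0' i (Finset.mem_univ i)) (abs_nonneg _)
    calc t ≤ ∑ i, |B k0 i| * s := h3
      _ = (∑ i, |B k0 i|) * s := by rw [Finset.sum_mul]
      _ ≤ C * s := mul_le_mul_of_nonneg_right (hrowB k0) hs0
  -- bounds on entries of X
  have hXbot : ∀ i : Fin m, r ≤ (i:ℕ) → ∀ k, |X i k| ≤ δ := by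
    intro i hi k
    have h1 : X i k = (X - Xs) i k + Xs i k := by simp [Matrix.sub_apply]
    rw [h1, hXs0 i hi k, add_zero]
    exact hX i k
  -- bound on |(X*Yᵀ) i j| for bottom rows
  have hXYbound : ∀ i : Fin m, r ≤ (i:ℕ) → |(X * Yᵀ) i j| ≤ (r:ℝ) * δ * t := by
    intro i hi
    have h1 : (X * Yᵀ) i j = ∑ k, X i k * Y j k := by
      simp [Matrix.mul_apply, Matrix.transpose_apply]
    rw [h1]
    calc |∑ k, X i k * Y j k| ≤ ∑ k, |X i k * Y j k| := Finset.abs_sum_le_sum_abs _ _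
      _ ≤ ∑ _k : Fin r, δ * t := by
          apply Finset.sum_le_sum
          intro k _
          rw [abs_mul]
          exact mul_le_mul (hXbot i hi k) (hty k) (abs_nonneg _) (le_of_lt hδ0)
      _ = (r:ℝ) * δ * t := by
          rw [Finset.sum_const, Finset.card_univ, Fintype.card_fin, nsmul_eq_mul]; ring
  -- sign identity on top rows
  have hsign : ∀ i : Fin m, (i:ℕ) < r → L i j * ((X * Yᵀ) i j) = |(X * Yᵀ) i j| := by
    intro i hi
    have hMij : M i j = 0 := hM i hi j
    have hBij : (X * Yᵀ - M) i j = (X * Yᵀ) i j := by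
      simp [Matrix.sub_apply, hMij]
    obtain ⟨h1, h2, h3⟩ := hL i j
    rcases lt_trichotomy ((X * Yᵀ) i j) 0 with h | h | h
    · rw [h2 (by rw [hBij]; exact h), abs_of_neg h]; ring
    · rw [h, abs_zero, mul_zero]
    · rw [h1 (by rw [hBij]; exact h), abs_of_pos h, one_mul]
  -- the pivot row index
  set i0 : Fin m := Fin.castLE hrm i0' with hi0def
  have hi0r : (i0:ℕ) < r := i0'.isLt
  -- lower bound for the pivot entry
  have hXYi0 : s - (r:ℝ) * δ * t ≤ |(X * Yᵀ) i0 j| := by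
    have h1 : (X * Yᵀ) i0 j = (A *ᵥ y) i0' + ∑ k, (X - Xs) i0 k * y k := by
      have hAX : ∀ k, A i0' k = Xs i0 k := by
        intro k
        rw [hA, Matrix.submatrix_apply, hi0def, id]
      simp only [Matrix.mul_apply, Matrix.transpose_apply, Matrix.mulVec, dotProduct]
      rw [← Finset.sum_add_distrib]
      apply Finset.sum_congr rfl
      intro k _
      simp only [Matrix.sub_apply, hAX k, hy]
      ring
    have h2 : |∑ k, (X - Xs) i0 k * y k| ≤ (r:ℝ) * δ * t := by
      calc |∑ k, (X - Xs) i0 k * y k| ≤ ∑ k, |(X - Xs) i0 k * y k| :=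
            Finset.abs_sum_le_sum_abs _ _
        _ ≤ ∑ _k : Fin r, δ * t := by
            apply Finset.sum_le_sum
            intro k _
            rw [abs_mul]
            exact mul_le_mul (hX i0 k) (hty k) (abs_nonneg _) (le_of_lt hδ0)
        _ = (r:ℝ) * δ * t := by
            rw [Finset.sum_const, Finset.card_univ, Fintype.card_fin, nsmul_eq_mul]; ring
    have h3 : s - |∑ k, (X - Xs) i0 k * y k| ≤ |(X * Yᵀ) i0 j| := by
      rw [h1]
      have h4 := abs_add_le ((A *ᵥ y) i0' + ∑ k, (X - Xs) i0 k * y k) (-(∑ k, (X - Xs) i0 k * y k))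
      simp only [add_neg_cancel_right, abs_neg] at h4
      linarith [h4]
    linarith
  -- S and its bounds
  set S : ℝ := ∑ i, L i j * ((X * Yᵀ) i j) with hS
  have hrδt0 : 0 ≤ (r:ℝ) * δ * t := mul_nonneg (mul_nonneg hr0.le hδ0.le) ht0.le
  have hS_lower : s - (r:ℝ) * δ * t - (m:ℝ) * ((r:ℝ) * δ * t) ≤ S := by
    have hsplit : S = L i0 j * ((X * Yᵀ) i0 j) +
        ∑ i ∈ Finset.univ.erase i0, L i j * ((X * Yᵀ) i j) := by
      rw [hS, ← Finset.add_sum_erase _ _ (Finset.mem_univ i0)]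
    have hterm1 : s - (r:ℝ) * δ * t ≤ L i0 j * ((X * Yᵀ) i0 j) := by
      rw [hsign i0 hi0r]; exact hXYi0
    have hterm2 : ∀ i ∈ Finset.univ.erase i0, -((r:ℝ) * δ * t) ≤ L i j * ((X * Yᵀ) i j) := by
      intro i _
      by_cases hir : (i:ℕ) < r
      · rw [hsign i hir]; linarith [abs_nonneg ((X * Yᵀ) i j)]
      · push_neg at hir
        have h1 : |L i j * ((X * Yᵀ) i j)| ≤ (r:ℝ) * δ * t := by
          rw [abs_mul]
          calc |L i j| * |(X * Yᵀ) i j| ≤ 1 * ((r:ℝ) * δ * t) :=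
                mul_le_mul (habsL i j) (hXYbound i hir) (abs_nonneg _) zero_le_one
            _ = (r:ℝ) * δ * t := one_mul _
        linarith [neg_abs_le (L i j * ((X * Yᵀ) i j))]
    have hsum2 : -((m:ℝ) * ((r:ℝ) * δ * t)) ≤
        ∑ i ∈ Finset.univ.erase i0, L i j * ((X * Yᵀ) i j) := by
      have h1 := Finset.card_nsmul_le_sum (Finset.univ.erase i0)
        (fun i => L i j * ((X * Yᵀ) i j)) (-((r:ℝ) * δ * t)) hterm2
      have h2 : ((Finset.univ.erase i0).card : ℝ) ≤ (m:ℝ) := by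
        have h3 := Finset.card_erase_le (a := i0) (s := (Finset.univ : Finset (Fin m)))
        have h4 : (Finset.univ : Finset (Fin m)).card = m := by
          rw [Finset.card_univ, Fintype.card_fin]
        exact_mod_cast le_trans h3 (le_of_eq h4)
      rw [nsmul_eq_mul] at h1
      linarith [h1, mul_le_mul_of_nonneg_right h2 hrδt0]
    rw [hsplit]
    linarith [hterm1, hsum2]
  -- upper bound for S via row j of Lᵀ * X
  obtain ⟨k1, -, hk1⟩ := Finset.exists_max_image Finset.univ (fun k => |(Lᵀ * X) j k|)
    ⟨⟨0, hr⟩, Finset.mem_univ _⟩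
  set w : ℝ := |(Lᵀ * X) j k1| with hw
  have hw0 : 0 ≤ w := abs_nonneg _
  have hS_eq : S = ∑ k, (Lᵀ * X) j k * Y j k := by
    rw [hS]
    simp only [Matrix.mul_apply, Matrix.transpose_apply, Finset.mul_sum, Finset.sum_mul]
    rw [Finset.sum_comm]
    apply Finset.sum_congr rfl
    intro k _
    apply Finset.sum_congr rfl
    intro i _
    ring
  have hS_upper : S ≤ (r:ℝ) * w * t := by
    rw [hS_eq]
    calc ∑ k, (Lᵀ * X) j k * Y j k ≤ |∑ k, (Lᵀ * X) j k * Y j k| := le_abs_self _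
      _ ≤ ∑ k, |(Lᵀ * X) j k * Y j k| := Finset.abs_sum_le_sum_abs _ _
      _ ≤ ∑ _k : Fin r, w * t := by
          apply Finset.sum_le_sum
          intro k _
          rw [abs_mul]
          exact mul_le_mul (hk1 k (Finset.mem_univ k)) (hty k) (abs_nonneg _) hw0
      _ = (r:ℝ) * w * t := by
          rw [Finset.sum_const, Finset.card_univ, Fintype.card_fin, nsmul_eq_mul]; ring
  -- deduce w ≥ 1/(2*C*r)
  have h2Cr : (0:ℝ) < 2 * C * (r:ℝ) := by linarith [mul_pos hC0 hr0]
  have hwlow : 1 / (2 * C * (r:ℝ)) ≤ w := by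
    have hCδ : C * (((m:ℝ)+1) * (r:ℝ) * δ) ≤ 1 / 2 := by
      have h1 := mul_le_mul_of_nonneg_left hδkey hC0.le
      have h2 : C * (1 / (2 * C)) = 1 / 2 := by
        rw [mul_one_div, div_eq_div_iff (by linarith : (0:ℝ) < 2 * C).ne' (two_ne_zero)]
        ring
      linarith [h1, h2.le, h2.ge]
    have hCS1 : C * (s - ((r:ℝ) * δ * t + (m:ℝ) * ((r:ℝ) * δ * t))) ≤ C * S := by
      apply mul_le_mul_of_nonneg_left _ hC0.le
      linarith [hS_lower]
    have hCS2 : C * S ≤ C * ((r:ℝ) * w * t) := mul_le_mul_of_nonneg_left hS_upper hC0.le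
    have hCδt : C * (((m:ℝ)+1) * (r:ℝ) * δ) * t ≤ (1/2) * t :=
      mul_le_mul_of_nonneg_right hCδ ht0.le
    have hhalf : t / 2 ≤ C * ((r:ℝ) * w * t) := by
      have e1 : C * (s - ((r:ℝ) * δ * t + (m:ℝ) * ((r:ℝ) * δ * t))) =
          C * s - C * (((m:ℝ)+1) * (r:ℝ) * δ) * t := by ring
      rw [e1] at hCS1
      linarith [htCs, hCS1, hCS2, hCδt]
    have hCrw : 1 / 2 ≤ C * (r:ℝ) * w := by
      have h5 : (1/2) * t ≤ (C * (r:ℝ) * w) * t := by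
        have e2 : C * ((r:ℝ) * w * t) = (C * (r:ℝ) * w) * t := by ring
        linarith [hhalf, e2.le, e2.ge]
      exact le_of_mul_le_mul_right (by linarith [h5]) ht0
    rw [div_le_iff₀ h2Cr]
    linarith [hCrw]
  -- lower bound on frobSq (Lᵀ * X)
  have hF1 : 2 * c ≤ frobSq (Lᵀ * X) := by
    rw [hc2]
    have hsq : 1 / (4 * C^2 * (r:ℝ)^2) ≤ ((Lᵀ * X) j k1)^2 := by
      have h1 : (1 / (2 * C * (r:ℝ)))^2 ≤ w^2 :=
        pow_le_pow_left₀ (le_of_lt (div_pos one_pos h2Cr)) hwlow 2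
      have h2 : w^2 = ((Lᵀ * X) j k1)^2 := sq_abs _
      have h3 : (1 / (2 * C * (r:ℝ)))^2 = 1 / (4 * C^2 * (r:ℝ)^2) := by
        rw [div_pow, one_pow, show (2 * C * (r:ℝ))^2 = 4 * C^2 * (r:ℝ)^2 by ring]
      rw [← h2, ← h3]; exact h1
    calc 1 / (4 * C^2 * (r:ℝ)^2) ≤ ((Lᵀ * X) j k1)^2 := hsq
      _ ≤ ∑ k, ((Lᵀ * X) j k)^2 :=
          Finset.single_le_sum (f := fun k => ((Lᵀ * X) j k)^2)
            (fun k _ => sq_nonneg _) (Finset.mem_univ k1)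
      _ ≤ frobSq (Lᵀ * X) := by
          unfold frobSq
          exact Finset.single_le_sum (f := fun j' => ∑ k, ((Lᵀ * X) j' k)^2)
            (fun j' _ => Finset.sum_nonneg fun k _ => sq_nonneg _) (Finset.mem_univ j)
  -- upper bound on frobSq (L * Y)
  have hF2 : frobSq (L * Y) ≤ (m:ℝ) * (r:ℝ) * (n:ℝ)^2 * δ^2 := by
    have hentry : ∀ (i : Fin m) (k : Fin r), ((L * Y) i k)^2 ≤ ((n:ℝ) * δ)^2 := by
      intro i k
      have h1 : |(L * Y) i k| ≤ (n:ℝ) * δ := by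
        calc |(L * Y) i k| = |∑ j', L i j' * Y j' k| := by rw [Matrix.mul_apply]
          _ ≤ ∑ j', |L i j' * Y j' k| := Finset.abs_sum_le_sum_abs _ _
          _ ≤ ∑ _j' : Fin n, 1 * δ := by
              apply Finset.sum_le_sum
              intro j' _
              rw [abs_mul]
              exact mul_le_mul (habsL i j') (hYδ j' k) (abs_nonneg _) zero_le_one
          _ = (n:ℝ) * δ := by
              rw [Finset.sum_const, Finset.card_univ, Fintype.card_fin, nsmul_eq_mul]; ring
      calc ((L * Y) i k)^2 = |(L * Y) i k|^2 := (sq_abs _).symm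
        _ ≤ ((n:ℝ) * δ)^2 := pow_le_pow_left₀ (abs_nonneg _) h1 2
    calc frobSq (L * Y) = ∑ i, ∑ k, ((L * Y) i k)^2 := rfl
      _ ≤ ∑ _i : Fin m, ∑ _k : Fin r, ((n:ℝ) * δ)^2 := by
          apply Finset.sum_le_sum
          intro i _
          exact Finset.sum_le_sum fun k _ => hentry i k
      _ = (m:ℝ) * (r:ℝ) * (n:ℝ)^2 * δ^2 := by
          simp [Finset.sum_const, Finset.card_univ, nsmul_eq_mul]
          ring
  -- conclude
  have hF2' : frobSq (L * Y) ≤ c / 2 := by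
    rw [hc_half]
    linarith [hF2, hδ2]
  linarith [hF1, hF2', hc0]
end
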